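/- arXiv:2502.13655 — 8 statements merged into one kernel-verified Lean document; each statement's English description precedes it below -/
import Mathlib

section
/- Let H be a real Hilbert space, T > 0, and let v ∈ L²((-∞,T); H) satisfy v(t) = 0 for almost every t ≤ 0. Then ∫_{-∞}^{T} ∫_{-∞}^{T} ‖v(t) − v(s)‖_H² |t−s|^{-2} ds dt = ∫_{0}^{T} ∫_{0}^{T} ‖v(t) − v(s)‖_H² |t−s|^{-2} ds dt + 2 ∫_{0}^{T} t^{-1} ‖v(t)‖_H² dt (as an identity in [0,∞]). -/
/-!
Split `(-∞, T)` into `(-∞, 0)` and `(0, T)`. Since `v` vanishes on `(-∞, 0)`, the square over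
`(-∞, 0)` contributes nothing, and by symmetry of the integrand the two mixed rectangles
contribute equally. On a mixed rectangle the integrand is `‖v t‖² / (t - s)²`, and
`∫_{-∞}^0 (t - s)⁻² ds = t⁻¹` produces the Hardy term.
-/

open MeasureTheory Set Filter Topology Function
open scoped ENNReal

lemma lintegral_Ioi_inv_sq {c : ℝ} (hc : 0 < c) :
    ∫⁻ u in Ioi c, ENNReal.ofReal (u ^ 2)⁻¹ = ENNReal.ofReal c⁻¹ := by
  have hderiv : ∀ u ∈ Ici c, HasDerivAt (fun u : ℝ => -u⁻¹) (u ^ 2)⁻¹ u := fun u hu => by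
    simpa using (hasDerivAt_inv (hc.trans_le hu).ne').fun_neg
  have hnonneg : ∀ u ∈ Ioi c, 0 ≤ (u ^ 2)⁻¹ := fun u _ => by positivity
  have hlim : Tendsto (fun u : ℝ => -u⁻¹) atTop (𝓝 0) := by
    simpa using (tendsto_inv_atTop_zero (𝕜 := ℝ)).neg
  rw [← ofReal_integral_eq_lintegral_ofReal
      (integrableOn_Ioi_deriv_of_nonneg' hderiv hnonneg hlim)
      ((ae_restrict_mem measurableSet_Ioi).mono hnonneg),
    integral_Ioi_of_hasDerivAt_of_nonneg' hderiv hnonneg hlim]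
  simp

lemma lintegral_Iio_inv_sq_sub {a t : ℝ} (hat : a < t) :
    ∫⁻ s in Iio a, ENNReal.ofReal ((t - s) ^ 2)⁻¹ = ENNReal.ofReal (t - a)⁻¹ := by
  rw [← lintegral_Ioi_inv_sq (sub_pos.2 hat),
    ← (Measure.measurePreserving_sub_left volume t).setLIntegral_comp_preimage_emb
      (MeasurableEquiv.subLeft t).measurableEmbedding (fun u => ENNReal.ofReal (u ^ 2)⁻¹)]
  congr 2
  ext s
  simp

lemma lintegral_Iio_sq_norm_sub_div_sq_of_ae_eq_zero {E : Type*} [SeminormedAddCommGroup E]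
    {v : ℝ → E} {a t : ℝ} (hv : ∀ᵐ s ∂volume.restrict (Iio a), v s = 0) (hat : a < t) :
    ∫⁻ s in Iio a, ENNReal.ofReal (‖v t - v s‖ ^ 2 / |t - s| ^ 2)
      = ENNReal.ofReal (‖v t‖ ^ 2 / (t - a)) := by
  calc ∫⁻ s in Iio a, ENNReal.ofReal (‖v t - v s‖ ^ 2 / |t - s| ^ 2)
      = ∫⁻ s in Iio a, ENNReal.ofReal (‖v t‖ ^ 2) * ENNReal.ofReal ((t - s) ^ 2)⁻¹ := by
        refine lintegral_congr_ae (hv.mono fun s hs => ?_)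
        dsimp only
        rw [hs, sub_zero, sq_abs, ← ENNReal.ofReal_mul (by positivity), div_eq_mul_inv]
    _ = ENNReal.ofReal (‖v t‖ ^ 2 / (t - a)) := by
        rw [lintegral_const_mul' _ _ ENNReal.ofReal_ne_top, lintegral_Iio_inv_sq_sub hat,
          ← ENNReal.ofReal_mul (by positivity), div_eq_mul_inv]

lemma lintegral_lintegral_add_measure_of_symm {α : Type*} [MeasurableSpace α]
    {μ ν : Measure α} [SFinite μ] [SFinite ν] {F : α → α → ℝ≥0∞}
    (hF : AEMeasurable (uncurry F) ((μ + ν).prod (μ + ν)))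
    (hsymm : ∀ t s, F t s = F s t) (hμ : ∀ᵐ t ∂μ, ∀ᵐ s ∂μ, F t s = 0) :
    ∫⁻ t, ∫⁻ s, F t s ∂(μ + ν) ∂(μ + ν)
      = ∫⁻ t, ∫⁻ s, F t s ∂ν ∂ν + 2 * ∫⁻ t, ∫⁻ s, F t s ∂μ ∂ν := by
  simp only [Measure.prod_add, Measure.add_prod, aemeasurable_add_measure_iff] at hF
  obtain ⟨⟨hμμ, hνμ⟩, hμν, -⟩ := hF
  have hμμ_zero : ∫⁻ t, ∫⁻ s, F t s ∂μ ∂μ = 0 := by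
    rw [lintegral_congr_ae (hμ.mono fun t ht => by rw [lintegral_congr_ae ht, lintegral_zero]),
      lintegral_zero]
  have hμν_swap : ∫⁻ t, ∫⁻ s, F t s ∂ν ∂μ = ∫⁻ t, ∫⁻ s, F t s ∂μ ∂ν := by
    rw [lintegral_lintegral_swap hμν]
    exact lintegral_congr fun t => lintegral_congr fun s => hsymm s t
  simp only [lintegral_add_measure]
  rw [lintegral_add_left' hμμ.lintegral_prod_right, lintegral_add_left' hνμ.lintegral_prod_right,
    hμμ_zero, hμν_swap]
  ring

lemma Measure.restrict_Iio_eq_restrict_Iio_add_restrict_Ioo {μ : Measure ℝ} [NullSingletonClass μ]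
    {a b : ℝ} (hab : a ≤ b) :
    μ.restrict (Iio b) = μ.restrict (Iio a) + μ.restrict (Ioo a b) := by
  rw [← Iio_union_Ico_eq_Iio hab,
    Measure.restrict_union ((Iio_disjoint_Ici le_rfl).mono_right Ico_subset_Ici_self)
      measurableSet_Ico,
    restrict_Ioo_eq_restrict_Ico]

lemma aemeasurable_sq_norm_sub_div_sq {E : Type*} [SeminormedAddCommGroup E] {v : ℝ → E}
    {μ : Measure ℝ} [SFinite μ] (hv : AEStronglyMeasurable v μ) :
    AEMeasurable (uncurry fun t s => ENNReal.ofReal (‖v t - v s‖ ^ 2 / |t - s| ^ 2))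
      (μ.prod μ) :=
  ENNReal.measurable_ofReal.comp_aemeasurable
    (((hv.comp_fst.sub hv.comp_snd).norm.pow 2).aemeasurable.div
      ((measurable_fst.sub measurable_snd).abs.pow_const 2).aemeasurable)

theorem stmt_0_general {H : Type*} [NormedAddCommGroup H]
    (T : ℝ) (hT : 0 < T) (v : ℝ → H)
    (hv : MemLp v 2 (volume.restrict (Iio T)))
    (h0 : ∀ᵐ t ∂(volume : Measure ℝ), t ≤ 0 → v t = 0) :
    (∫⁻ t in Iio T, ∫⁻ s in Iio T, ENNReal.ofReal (‖v t - v s‖ ^ 2 / |t - s| ^ 2))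
      = (∫⁻ t in Ioo 0 T, ∫⁻ s in Ioo 0 T,
          ENNReal.ofReal (‖v t - v s‖ ^ 2 / |t - s| ^ 2))
        + 2 * ∫⁻ t in Ioo 0 T, ENNReal.ofReal (‖v t‖ ^ 2 / t) := by
  have hv0 : ∀ᵐ s ∂volume.restrict (Iio 0), v s = 0 :=
    (ae_restrict_iff' measurableSet_Iio).2 (h0.mono fun s hs hneg => hs hneg.le)
  have hF := aemeasurable_sq_norm_sub_div_sq hv.aestronglyMeasurable
  rw [Measure.restrict_Iio_eq_restrict_Iio_add_restrict_Ioo hT.le] at hF ⊢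
  rw [lintegral_lintegral_add_measure_of_symm hF
    (fun t s => by rw [norm_sub_rev, abs_sub_comm])
    (hv0.mono fun t ht => hv0.mono fun s hs => by simp [ht, hs])]
  congr 2
  refine setLIntegral_congr_fun measurableSet_Ioo fun t ht => ?_
  rw [lintegral_Iio_sq_norm_sub_div_sq_of_ae_eq_zero hv0 ht.1, sub_zero]

/-- Extension-by-zero identity (eq. (2.7)): for `v ∈ L²((-∞,T); H)` vanishing
a.e. on `(-∞,0]`, the `H^{1/2}` Sobolev–Slobodeckij seminorm (squared) over
`(-∞,T)` equals the seminorm over `(0,T)` plus twice the weighted Hardy term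
`∫₀ᵀ t⁻¹ ‖v(t)‖² dt`, as an identity in `[0,∞]`. -/
theorem stmt_0 {H : Type*} [NormedAddCommGroup H] [InnerProductSpace ℝ H]
    [CompleteSpace H]
    (T : ℝ) (hT : 0 < T) (v : ℝ → H)
    (hv : MemLp v 2 (volume.restrict (Iio T)))
    (h0 : ∀ᵐ t ∂(volume : Measure ℝ), t ≤ 0 → v t = 0) :
    (∫⁻ t in Iio T, ∫⁻ s in Iio T, ENNReal.ofReal (‖v t - v s‖ ^ 2 / |t - s| ^ 2))
      = (∫⁻ t in Ioo 0 T, ∫⁻ s in Ioo 0 T,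
          ENNReal.ofReal (‖v t - v s‖ ^ 2 / |t - s| ^ 2))
        + 2 * ∫⁻ t in Ioo 0 T, ENNReal.ofReal (‖v t‖ ^ 2 / t) :=
  stmt_0_general T hT v hv h0
end

section
/- Let K_t ⊂ ℝ be a bounded interval of length h_t > 0, let K_x ⊂ ℝ^d be a bounded measurable set with 0 < |K_x| < ∞, and set K = K_t × K_x. Let h_x > 0 and C_x > 0, and let v ∈ L²(K) and g ∈ L²(K) be such that for almost every t ∈ K_t the spatial Poincaré inequality ‖v(t,·) − ⟨v(t,·)⟩_{K_x}‖_{L²(K_x)} ≤ C_x h_x ‖g(t,·)‖_{L²(K_x)} holds. Then ‖v − ⟨v⟩_K‖²_{L²(K)} ≤ C_x² h_x² ‖g‖²_{L²(K)} + h_t ∫_{K_t} ∫_{K_t} ‖v(t,·) − v(s,·)‖²_{L²(K_x)} |t−s|^{-2} ds dt. -/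
open MeasureTheory Set

/-!
For a.e. time `t`, the spatial variance decomposition
`‖v(t) - c‖² = ‖v(t) - m(t)‖² + |K_x| (m(t) - c)²`, where `m(t)` is the spatial mean and
`c = ⟨m⟩_{K_t}` the space-time mean, splits the error into a spatial part, controlled by the spatial
Poincaré inequality, and the oscillation in time of the spatial means. Jensen's inequality, used
twice, bounds the latter: `(m(t) - ⟨m⟩_{K_t})² ≤ ⨍_s (m(t) - m(s))²` and
`|K_x| (m(t) - m(s))² ≤ ‖v(t) - v(s)‖²`. Finally `|t - s| ≤ h_t` gives
`‖v(t) - v(s)‖² ≤ h_t² ‖v(t) - v(s)‖² / |t - s|²`, and the factors `h_t⁻¹ h_t²` leave `h_t`.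
-/

/-- The measure on the time-space cylinder `K = K_t × K_x`. -/
noncomputable def cylMeasure {d : ℕ} (Kt : Set ℝ) (Kx : Set (Fin d → ℝ)) :
    Measure (ℝ × (Fin d → ℝ)) :=
  (volume.restrict Kt).prod (volume.restrict Kx)

/-- The spatial mean `⟨v(t,·)⟩_{K_x}` of `v(t,·)` over `K_x`. -/
noncomputable def spatialMean {d : ℕ} (Kx : Set (Fin d → ℝ))
    (v : ℝ → (Fin d → ℝ) → ℝ) (t : ℝ) : ℝ :=
  (volume Kx).toReal⁻¹ * ∫ x in Kx, v t x

/-- The mean `⟨v⟩_K` of `v` over the cylinder `K = K_t × K_x`. -/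
noncomputable def cylMean {d : ℕ} (Kt : Set ℝ) (Kx : Set (Fin d → ℝ))
    (v : ℝ → (Fin d → ℝ) → ℝ) : ℝ :=
  ((cylMeasure Kt Kx) univ).toReal⁻¹ * ∫ p, v p.1 p.2 ∂(cylMeasure Kt Kx)

namespace MeasureTheory

variable {α β : Type*} [MeasurableSpace α] [MeasurableSpace β] {μ : Measure α} {ν : Measure β}

theorem integral_sub_const_sq [IsFiniteMeasure μ] {f : α → ℝ} (hf : MemLp f 2 μ) (c : ℝ) :
    ∫ x, (f x - c) ^ 2 ∂μ
      = ∫ x, (f x - ⨍ y, f y ∂μ) ^ 2 ∂μ + μ.real univ * (⨍ y, f y ∂μ - c) ^ 2 := by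
  set m := ⨍ y, f y ∂μ
  have hdev : MemLp (fun x => f x - m) 2 μ := hf.sub (memLp_const m)
  have hcross : Integrable (fun x => 2 * (m - c) * (f x - m)) μ :=
    (hdev.integrable one_le_two).const_mul _
  calc ∫ x, (f x - c) ^ 2 ∂μ
      = ∫ x, ((f x - m) ^ 2 + 2 * (m - c) * (f x - m) + (m - c) ^ 2) ∂μ := by
        congr 1 with x; ring
    _ = ∫ x, (f x - m) ^ 2 ∂μ + μ.real univ * (m - c) ^ 2 := by
        rw [integral_add _ (integrable_const _), integral_add hdev.integrable_sq hcross,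
          integral_const_mul, integral_sub_average, integral_const, smul_eq_mul]
        · ring
        · exact hdev.integrable_sq.add hcross

theorem ofReal_measureReal_mul_sq_average_le [IsFiniteMeasure μ] {f : α → ℝ}
    (hf : AEStronglyMeasurable f μ) :
    ENNReal.ofReal (μ.real univ * (⨍ x, f x ∂μ) ^ 2) ≤ ∫⁻ x, ENNReal.ofReal (f x ^ 2) ∂μ := by
  have hsq : 0 ≤ᵐ[μ] fun x => f x ^ 2 := ae_of_all _ fun x => sq_nonneg (f x)
  by_cases hf2 : MemLp f 2 μ
  · rw [← ofReal_integral_eq_lintegral_ofReal hf2.integrable_sq hsq]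
    refine ENNReal.ofReal_le_ofReal ?_
    have hvar := integral_sub_const_sq hf2 0
    simp only [sub_zero] at hvar
    have hdev : 0 ≤ ∫ x, (f x - ⨍ y, f y ∂μ) ^ 2 ∂μ := integral_nonneg fun x => sq_nonneg _
    linarith
  · have hinf : ∫⁻ x, ENNReal.ofReal (f x ^ 2) ∂μ = ⊤ := by
      by_contra hfin
      exact hf2 ((memLp_two_iff_integrable_sq hf).2
        ((lintegral_ofReal_ne_top_iff_integrable (hf.pow 2) hsq).1 hfin))
    exact hinf ▸ le_top

theorem ofReal_measureReal_mul_sq_average_sub_average_le [IsFiniteMeasure μ] {f g : α → ℝ}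
    (hf : Integrable f μ) (hg : Integrable g μ) :
    ENNReal.ofReal (μ.real univ * (⨍ x, f x ∂μ - ⨍ x, g x ∂μ) ^ 2)
      ≤ ∫⁻ x, ENNReal.ofReal ((f x - g x) ^ 2) ∂μ := by
  have hsub : ⨍ x, f x ∂μ - ⨍ x, g x ∂μ = ⨍ x, (f x - g x) ∂μ := by
    simp only [average_eq, integral_sub hf hg, smul_sub]
  rw [hsub]
  exact ofReal_measureReal_mul_sq_average_le (hf.sub hg).aestronglyMeasurable

theorem MemLp.prod_right_ae [SFinite μ] [SFinite ν] {F : α × β → ℝ}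
    (hF : MemLp F 2 (μ.prod ν)) : ∀ᵐ t ∂μ, MemLp (fun x => F (t, x)) 2 ν := by
  filter_upwards [hF.integrable_sq.prod_right_ae, hF.aestronglyMeasurable.prodMk_left]
    with t hsq hmeas
  exact (memLp_two_iff_integrable_sq hmeas).2 hsq

theorem Integrable.average_prod_left [SFinite μ] [SFinite ν] {F : α × β → ℝ}
    (hF : Integrable F (μ.prod ν)) : Integrable (fun t => ⨍ x, F (t, x) ∂ν) μ := by
  simpa only [average_eq, smul_eq_mul] using hF.integral_prod_left.const_mul (ν.real univ)⁻¹

theorem average_prod [IsFiniteMeasure μ] [IsFiniteMeasure ν] {F : α → β → ℝ}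
    (hF : Integrable (fun p : α × β => F p.1 p.2) (μ.prod ν)) :
    ⨍ p, F p.1 p.2 ∂(μ.prod ν) = ⨍ t, ⨍ x, F t x ∂ν ∂μ := by
  simp only [average_eq, smul_eq_mul, integral_const_mul]
  rw [integral_prod _ hF, measureReal_def, ← univ_prod_univ, Measure.prod_prod,
    ENNReal.toReal_mul, ← measureReal_def, ← measureReal_def, mul_inv]
  ring

theorem lintegral_ofReal_integral_sq_eq_lintegral_prod [SFinite μ] [SFinite ν] {G : α → β → ℝ}
    (hG : MemLp (fun p : α × β => G p.1 p.2) 2 (μ.prod ν)) :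
    ∫⁻ t, ENNReal.ofReal (∫ x, G t x ^ 2 ∂ν) ∂μ
      = ∫⁻ p, ENNReal.ofReal (G p.1 p.2 ^ 2) ∂(μ.prod ν) := by
  have hGm := hG.aestronglyMeasurable.aemeasurable
  rw [lintegral_prod _ (by fun_prop)]
  refine lintegral_congr_ae ?_
  filter_upwards [hG.prod_right_ae] with t ht
  exact ofReal_integral_eq_lintegral_ofReal ht.integrable_sq (ae_of_all _ fun x => sq_nonneg _)

theorem lintegral_sq_sub_average_prod_eq [IsFiniteMeasure μ] [IsFiniteMeasure ν]
    {F : α → β → ℝ} (hF : MemLp (fun p : α × β => F p.1 p.2) 2 (μ.prod ν)) :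
    ∫⁻ p, ENNReal.ofReal ((F p.1 p.2 - ⨍ q, F q.1 q.2 ∂(μ.prod ν)) ^ 2) ∂(μ.prod ν)
      = ∫⁻ t, ENNReal.ofReal (∫ x, (F t x - ⨍ y, F t y ∂ν) ^ 2 ∂ν) ∂μ
        + ∫⁻ t, ENNReal.ofReal (ν.real univ * (⨍ y, F t y ∂ν - ⨍ s, ⨍ y, F s y ∂ν ∂μ) ^ 2) ∂μ := by
  have hm : AEMeasurable (fun t => ⨍ y, F t y ∂ν) μ :=
    (hF.integrable one_le_two).average_prod_left.aemeasurable
  have hFm := hF.aestronglyMeasurable.aemeasurable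
  rw [average_prod (hF.integrable one_le_two), lintegral_prod _ (by fun_prop),
    ← lintegral_add_right' _ (by fun_prop)]
  refine lintegral_congr_ae ?_
  filter_upwards [hF.prod_right_ae] with t ht
  rw [← ofReal_integral_eq_lintegral_ofReal (f := fun x => (F t x - _) ^ 2)
      (ht.sub (memLp_const _)).integrable_sq (ae_of_all _ fun x => sq_nonneg _),
    integral_sub_const_sq ht,
    ENNReal.ofReal_add (integral_nonneg fun x => sq_nonneg _) (by positivity)]

theorem lintegral_measureReal_mul_sq_average_sub_average_le [IsFiniteMeasure μ]
    [IsFiniteMeasure ν] {F : α → β → ℝ}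
    (hF : Integrable (fun p : α × β => F p.1 p.2) (μ.prod ν)) :
    ∫⁻ t, ENNReal.ofReal (ν.real univ * (⨍ y, F t y ∂ν - ⨍ s, ⨍ y, F s y ∂ν ∂μ) ^ 2) ∂μ
      ≤ ENNReal.ofReal (μ.real univ)⁻¹ *
          ∫⁻ t, ∫⁻ s, ∫⁻ x, ENNReal.ofReal ((F t x - F s x) ^ 2) ∂ν ∂μ ∂μ := by
  rcases eq_zero_or_neZero μ with rfl | hμ
  · simp
  set m := fun t => ⨍ y, F t y ∂ν
  have hm : Integrable m μ := hF.average_prod_left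
  have hμpos : 0 < μ.real univ := measureReal_univ_pos
  rw [← lintegral_const_mul' _ _ ENNReal.ofReal_ne_top]
  refine lintegral_mono_ae ?_
  filter_upwards [hF.prod_right_ae] with t ht
  calc ENNReal.ofReal (ν.real univ * (m t - ⨍ s, m s ∂μ) ^ 2)
      = ENNReal.ofReal (μ.real univ)⁻¹ * (ENNReal.ofReal (ν.real univ) *
          ENNReal.ofReal (μ.real univ * (⨍ _, m t ∂μ - ⨍ s, m s ∂μ) ^ 2)) := by
        rw [average_const, ← ENNReal.ofReal_mul measureReal_nonneg,
          ← ENNReal.ofReal_mul (by positivity)]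
        congr 1
        field_simp
    _ ≤ ENNReal.ofReal (μ.real univ)⁻¹ *
          (ENNReal.ofReal (ν.real univ) * ∫⁻ s, ENNReal.ofReal ((m t - m s) ^ 2) ∂μ) := by
        gcongr
        exact ofReal_measureReal_mul_sq_average_sub_average_le (integrable_const _) hm
    _ = ENNReal.ofReal (μ.real univ)⁻¹ *
          ∫⁻ s, ENNReal.ofReal (ν.real univ * (m t - m s) ^ 2) ∂μ := by
        rw [← lintegral_const_mul' _ _ ENNReal.ofReal_ne_top]
        simp only [ENNReal.ofReal_mul measureReal_nonneg]
    _ ≤ ENNReal.ofReal (μ.real univ)⁻¹ *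
          ∫⁻ s, ∫⁻ x, ENNReal.ofReal ((F t x - F s x) ^ 2) ∂ν ∂μ := by
        gcongr 1
        refine lintegral_mono_ae ?_
        filter_upwards [hF.prod_right_ae] with s hs
        exact ofReal_measureReal_mul_sq_average_sub_average_le ht hs

theorem lintegral_sq_sub_average_prod_le [IsFiniteMeasure μ] [IsFiniteMeasure ν]
    {F : α → β → ℝ} (hF : MemLp (fun p : α × β => F p.1 p.2) 2 (μ.prod ν)) :
    ∫⁻ p, ENNReal.ofReal ((F p.1 p.2 - ⨍ q, F q.1 q.2 ∂(μ.prod ν)) ^ 2) ∂(μ.prod ν)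
      ≤ ∫⁻ t, ENNReal.ofReal (∫ x, (F t x - ⨍ y, F t y ∂ν) ^ 2 ∂ν) ∂μ
        + ENNReal.ofReal (μ.real univ)⁻¹ *
            ∫⁻ t, ∫⁻ s, ∫⁻ x, ENNReal.ofReal ((F t x - F s x) ^ 2) ∂ν ∂μ ∂μ := by
  rw [lintegral_sq_sub_average_prod_eq hF]
  gcongr
  exact lintegral_measureReal_mul_sq_average_sub_average_le (hF.integrable one_le_two)

theorem lintegral_sq_sub_le_of_mem_Ioo {a b t s : ℝ} (ht : t ∈ Ioo a b) (hs : s ∈ Ioo a b)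
    (F : ℝ → β → ℝ) :
    ∫⁻ x, ENNReal.ofReal ((F t x - F s x) ^ 2) ∂ν
      ≤ ENNReal.ofReal ((b - a) ^ 2) *
          ∫⁻ x, ENNReal.ofReal ((F t x - F s x) ^ 2 / |t - s| ^ 2) ∂ν := by
  rcases eq_or_ne t s with rfl | hts
  · simp
  have hpos : 0 < |t - s| := abs_pos.2 (sub_ne_zero.2 hts)
  have hlt : |t - s| ≤ b - a :=
    (abs_sub_lt_iff.2 ⟨by linarith [ht.2, hs.1], by linarith [ht.1, hs.2]⟩).le
  rw [← lintegral_const_mul' _ _ ENNReal.ofReal_ne_top]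
  refine lintegral_mono fun x => ?_
  rw [← ENNReal.ofReal_mul (sq_nonneg _)]
  refine ENNReal.ofReal_le_ofReal ?_
  rw [mul_div_assoc', le_div_iff₀ (by positivity), mul_comm]
  gcongr

theorem setLIntegral_Ioo_sq_sub_le {a b : ℝ} (F : ℝ → β → ℝ) :
    ∫⁻ t in Ioo a b, ∫⁻ s in Ioo a b, ∫⁻ x, ENNReal.ofReal ((F t x - F s x) ^ 2) ∂ν
      ≤ ENNReal.ofReal ((b - a) ^ 2) * ∫⁻ t in Ioo a b, ∫⁻ s in Ioo a b,
          ∫⁻ x, ENNReal.ofReal ((F t x - F s x) ^ 2 / |t - s| ^ 2) ∂ν := by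
  rw [← lintegral_const_mul' _ _ ENNReal.ofReal_ne_top]
  refine setLIntegral_mono' measurableSet_Ioo fun t ht => ?_
  rw [← lintegral_const_mul' _ _ ENNReal.ofReal_ne_top]
  exact setLIntegral_mono' measurableSet_Ioo fun s hs => lintegral_sq_sub_le_of_mem_Ioo ht hs F

end MeasureTheory

theorem cylMean_eq_average {d : ℕ} (Kt : Set ℝ) (Kx : Set (Fin d → ℝ))
    (v : ℝ → (Fin d → ℝ) → ℝ) :
    cylMean Kt Kx v = ⨍ p, v p.1 p.2 ∂cylMeasure Kt Kx := by
  rw [cylMean, average_eq, smul_eq_mul, measureReal_def]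

theorem spatialMean_eq_setAverage {d : ℕ} (Kx : Set (Fin d → ℝ))
    (v : ℝ → (Fin d → ℝ) → ℝ) (t : ℝ) :
    spatialMean Kx v t = ⨍ x in Kx, v t x := by
  rw [spatialMean, setAverage_eq, smul_eq_mul, measureReal_def]

theorem stmt_2_general {d : ℕ} (a b ht : ℝ) (hab : a < b) (hht : b - a = ht)
    (Kx : Set (Fin d → ℝ)) (hKxfin : volume Kx < ⊤) (hx Cx : ℝ)
    (v g : ℝ → (Fin d → ℝ) → ℝ)
    (hv : MemLp (fun p : ℝ × (Fin d → ℝ) => v p.1 p.2) 2 (cylMeasure (Ioo a b) Kx))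
    (hg : MemLp (fun p : ℝ × (Fin d → ℝ) => g p.1 p.2) 2 (cylMeasure (Ioo a b) Kx))
    (hpoin : ∀ᵐ t ∂(volume.restrict (Ioo a b)),
      (∫ x in Kx, (v t x - spatialMean Kx v t) ^ 2)
        ≤ (Cx * hx) ^ 2 * ∫ x in Kx, g t x ^ 2) :
    (∫⁻ p, ENNReal.ofReal ((v p.1 p.2 - cylMean (Ioo a b) Kx v) ^ 2)
        ∂(cylMeasure (Ioo a b) Kx))
      ≤ ENNReal.ofReal (Cx ^ 2 * hx ^ 2) *
            (∫⁻ p, ENNReal.ofReal (g p.1 p.2 ^ 2) ∂(cylMeasure (Ioo a b) Kx))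
        + ENNReal.ofReal ht *
            ∫⁻ t in Ioo a b, ∫⁻ s in Ioo a b, ∫⁻ x in Kx,
              ENNReal.ofReal ((v t x - v s x) ^ 2 / |t - s| ^ 2) := by
  have : IsFiniteMeasure (volume.restrict (Ioo a b)) :=
    isFiniteMeasure_restrict.2 measure_Ioo_lt_top.ne
  have : IsFiniteMeasure (volume.restrict Kx) := isFiniteMeasure_restrict.2 hKxfin.ne
  have hlen : (volume.restrict (Ioo a b)).real univ = ht := by
    rw [measureReal_restrict_apply_univ, Real.volume_real_Ioo_of_le hab.le, hht]
  rw [cylMean_eq_average]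
  refine (lintegral_sq_sub_average_prod_le hv).trans (add_le_add ?_ ?_)
  · rw [cylMeasure, ← lintegral_ofReal_integral_sq_eq_lintegral_prod hg,
      ← lintegral_const_mul' _ _ ENNReal.ofReal_ne_top]
    refine lintegral_mono_ae ?_
    filter_upwards [hpoin] with t hpoin_t
    rw [← ENNReal.ofReal_mul (by positivity : (0 : ℝ) ≤ Cx ^ 2 * hx ^ 2), ← mul_pow,
      ← spatialMean_eq_setAverage]
    exact ENNReal.ofReal_le_ofReal hpoin_t
  · calc ENNReal.ofReal ((volume.restrict (Ioo a b)).real univ)⁻¹ * _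
        ≤ ENNReal.ofReal ht⁻¹ * (ENNReal.ofReal ((b - a) ^ 2) * _) := by
          rw [hlen]
          gcongr
          exact setLIntegral_Ioo_sq_sub_le v
      _ = _ := by
          have hht0 : 0 < ht := hht ▸ sub_pos.2 hab
          rw [hht, ← mul_assoc, ← ENNReal.ofReal_mul (inv_nonneg.2 hht0.le)]
          congr 2
          field_simp

/-- Parabolic Poincaré inequality (Lemma 4.3): on a time-space cylinder
`K = K_t × K_x` with `|K_t| = h_t`, if for a.e. `t` the spatial Poincaré
inequality `‖v(t,·) − ⟨v(t,·)⟩_{K_x}‖_{L²(K_x)} ≤ C_x h_x ‖g(t,·)‖_{L²(K_x)}`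
holds, then
`‖v − ⟨v⟩_K‖²_{L²(K)} ≤ C_x² h_x² ‖g‖²_{L²(K)}
  + h_t ∫∫ ‖v(t,·) − v(s,·)‖²_{L²(K_x)} |t−s|⁻² ds dt`. -/
theorem stmt_2 {d : ℕ} (a b ht : ℝ) (hab : a < b) (hht : b - a = ht)
    (Kx : Set (Fin d → ℝ)) (hKxm : MeasurableSet Kx)
    (hKx0 : 0 < volume Kx) (hKxfin : volume Kx < ⊤)
    (hx Cx : ℝ) (hhx : 0 < hx) (hCx : 0 < Cx)
    (v g : ℝ → (Fin d → ℝ) → ℝ)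
    (hv : MemLp (fun p : ℝ × (Fin d → ℝ) => v p.1 p.2) 2 (cylMeasure (Ioo a b) Kx))
    (hg : MemLp (fun p : ℝ × (Fin d → ℝ) => g p.1 p.2) 2 (cylMeasure (Ioo a b) Kx))
    (hpoin : ∀ᵐ t ∂(volume.restrict (Ioo a b)),
      (∫ x in Kx, (v t x - spatialMean Kx v t) ^ 2)
        ≤ (Cx * hx) ^ 2 * ∫ x in Kx, g t x ^ 2) :
    (∫⁻ p, ENNReal.ofReal ((v p.1 p.2 - cylMean (Ioo a b) Kx v) ^ 2)
        ∂(cylMeasure (Ioo a b) Kx))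
      ≤ ENNReal.ofReal (Cx ^ 2 * hx ^ 2) *
            (∫⁻ p, ENNReal.ofReal (g p.1 p.2 ^ 2) ∂(cylMeasure (Ioo a b) Kx))
        + ENNReal.ofReal ht *
            ∫⁻ t in Ioo a b, ∫⁻ s in Ioo a b, ∫⁻ x in Kx,
              ENNReal.ofReal ((v t x - v s x) ^ 2 / |t - s| ^ 2) :=
  stmt_2_general a b ht hab hht Kx hKxfin hx Cx v g hv hg hpoin
end

section
/- Let (X, μ) be a measure space, and let q⁻ and q′ be measurable sets with 0 < μ(q⁻) < ∞ and 0 < μ(q′) < ∞ such that ω := q⁻ ∩ q′ satisfies μ(ω) > 0. Set q := q⁻ ∪ q′. Then every v ∈ L²(q) satisfies ‖v − ⟨v⟩_q‖²_{L²(q)} ≤ (1 + 2 μ(q′)/μ(ω)) ( ‖v − ⟨v⟩_{q⁻}‖²_{L²(q⁻)} + ‖v − ⟨v⟩_{q′}‖²_{L²(q′)} ). -/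
/-!
Write `m⁻ = ⟨v⟩_{q⁻}` and `m′ = ⟨v⟩_{q′}`. The mean minimizes the quadratic deviation, so
`∫_q (v - ⟨v⟩_q)² ≤ ∫_q (v - m⁻)² ≤ ∫_{q⁻} (v - m⁻)² + ∫_{q′} (v - m⁻)²`, and the last term is
`∫_{q′} (v - m′)² + μ(q′) (m′ - m⁻)²`. Integrating `(m′ - m⁻)² ≤ 2 (v - m⁻)² + 2 (v - m′)²` over
the overlap `ω` bounds `μ(ω) (m′ - m⁻)²` by twice the sum of the two oscillations.
-/

open MeasureTheory Set

/-- The integral mean `⟨v⟩_A = μ(A)⁻¹ ∫_A v dμ`. -/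
noncomputable def setMean {X : Type*} [MeasurableSpace X] (μ : Measure X)
    (A : Set X) (v : X → ℝ) : ℝ :=
  (μ A).toReal⁻¹ * ∫ x in A, v x ∂μ

section

variable {X : Type*} [MeasurableSpace X] {μ : Measure X} {S T : Set X} {v : X → ℝ}

theorem integrableOn_sq_sub_const (hS : μ S ≠ ⊤) (hv : MemLp v 2 (μ.restrict S)) (c : ℝ) :
    IntegrableOn (fun x => (v x - c) ^ 2) S μ :=
  have := isFiniteMeasure_restrict.2 hS
  (hv.sub (memLp_const c)).integrable_sq

theorem setIntegral_sub_setMean (hS : μ S ≠ ⊤) (hv : IntegrableOn v S μ) :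
    ∫ x in S, (v x - setMean μ S v) ∂μ = 0 := by
  have := isFiniteMeasure_restrict.2 hS
  by_cases hS0 : μ S = 0
  · simp [Measure.restrict_eq_zero.2 hS0]
  have hSreal : μ.real S ≠ 0 := (measureReal_ne_zero_iff hS).2 hS0
  rw [integral_sub hv (integrable_const _), setIntegral_const, smul_eq_mul, setMean,
    ← Measure.real, mul_inv_cancel_left₀ hSreal, sub_self]

theorem setIntegral_sq_sub_eq (hS : μ S ≠ ⊤) (hv : MemLp v 2 (μ.restrict S)) (c : ℝ) :
    ∫ x in S, (v x - c) ^ 2 ∂μ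
      = (∫ x in S, (v x - setMean μ S v) ^ 2 ∂μ) + μ.real S * (setMean μ S v - c) ^ 2 := by
  have := isFiniteMeasure_restrict.2 hS
  set m := setMean μ S v
  have hdev : Integrable (fun x => v x - m) (μ.restrict S) :=
    (hv.integrable one_le_two).sub (integrable_const m)
  have hdev_sq := integrableOn_sq_sub_const hS hv m
  calc ∫ x in S, (v x - c) ^ 2 ∂μ
      = ∫ x in S, ((v x - m) ^ 2 + 2 * (m - c) * (v x - m) + (m - c) ^ 2) ∂μ := by
        congr 1 with x; ring
    _ = (∫ x in S, (v x - m) ^ 2 ∂μ) + 2 * (m - c) * (∫ x in S, (v x - m) ∂μ)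
          + μ.real S * (m - c) ^ 2 := by
        rw [integral_add _ (integrable_const _), integral_add hdev_sq (hdev.const_mul _),
          integral_const_mul, setIntegral_const, smul_eq_mul]
        exact hdev_sq.add (hdev.const_mul _)
    _ = _ := by rw [setIntegral_sub_setMean hS (hv.integrable one_le_two)]; ring

theorem setIntegral_sq_sub_setMean_le (hS : μ S ≠ ⊤) (hv : MemLp v 2 (μ.restrict S))
    (c : ℝ) :
    ∫ x in S, (v x - setMean μ S v) ^ 2 ∂μ ≤ ∫ x in S, (v x - c) ^ 2 ∂μ := by
  rw [setIntegral_sq_sub_eq hS hv c]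
  exact le_add_of_nonneg_right (by positivity)

theorem setIntegral_union_le_add {f : X → ℝ} (hf : 0 ≤ f) (hfS : IntegrableOn f S μ)
    (hfT : IntegrableOn f T μ) :
    ∫ x in S ∪ T, f x ∂μ ≤ ∫ x in S, f x ∂μ + ∫ x in T, f x ∂μ := by
  rw [← integral_add_measure hfS hfT]
  exact integral_mono_measure (Measure.restrict_union_le S T) (ae_of_all _ hf)
    (Integrable.add_measure hfS hfT)

theorem measureReal_inter_mul_sq_sub_le (hS : μ S ≠ ⊤) (hT : μ T ≠ ⊤)
    (hvS : MemLp v 2 (μ.restrict S)) (hvT : MemLp v 2 (μ.restrict T)) (a b : ℝ) :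
    μ.real (S ∩ T) * (a - b) ^ 2
      ≤ 2 * ((∫ x in S, (v x - a) ^ 2 ∂μ) + ∫ x in T, (v x - b) ^ 2 ∂μ) := by
  have := isFiniteMeasure_restrict.2 (measure_ne_top_of_subset (inter_subset_left (t := T)) hS)
  have hfS := integrableOn_sq_sub_const hS hvS a
  have hfT := integrableOn_sq_sub_const hT hvT b
  have hfST := hfS.mono_set (inter_subset_left (t := T))
  have hfTS := hfT.mono_set (inter_subset_right (s := S))
  calc μ.real (S ∩ T) * (a - b) ^ 2 = ∫ x in S ∩ T, (a - b) ^ 2 ∂μ := by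
        rw [setIntegral_const, smul_eq_mul]
    _ ≤ ∫ x in S ∩ T, (2 * (v x - a) ^ 2 + 2 * (v x - b) ^ 2) ∂μ :=
        integral_mono (integrable_const _) ((hfST.const_mul 2).add (hfTS.const_mul 2))
          fun x => by nlinarith [sq_nonneg (2 * v x - a - b)]
    _ = 2 * ((∫ x in S ∩ T, (v x - a) ^ 2 ∂μ) + ∫ x in S ∩ T, (v x - b) ^ 2 ∂μ) := by
        rw [integral_add (hfST.const_mul 2) (hfTS.const_mul 2), integral_const_mul,
          integral_const_mul, mul_add]
    _ ≤ _ := by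
        gcongr
        · exact ae_of_all _ fun x => sq_nonneg _
        · exact inter_subset_left
        · exact ae_of_all _ fun x => sq_nonneg _
        · exact inter_subset_right

end

theorem stmt_4_general {X : Type*} [MeasurableSpace X] (μ : Measure X)
    (qm qp : Set X) (hqmfin : μ qm < ⊤) (hqpfin : μ qp < ⊤)
    (hω : 0 < μ (qm ∩ qp))
    (v : X → ℝ) (hv : MemLp v 2 (μ.restrict (qm ∪ qp))) :
    (∫ x in qm ∪ qp, (v x - setMean μ (qm ∪ qp) v) ^ 2 ∂μ)
      ≤ (1 + 2 * (μ qp).toReal / (μ (qm ∩ qp)).toReal) *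
          ((∫ x in qm, (v x - setMean μ qm v) ^ 2 ∂μ)
            + ∫ x in qp, (v x - setMean μ qp v) ^ 2 ∂μ) := by
  have hvm : MemLp v 2 (μ.restrict qm) :=
    hv.mono_measure (Measure.restrict_mono subset_union_left le_rfl)
  have hvp : MemLp v 2 (μ.restrict qp) :=
    hv.mono_measure (Measure.restrict_mono subset_union_right le_rfl)
  set mm := setMean μ qm v
  set A := ∫ x in qm, (v x - mm) ^ 2 ∂μ
  set B := ∫ x in qp, (v x - setMean μ qp v) ^ 2 ∂μ
  have hW : 0 < μ.real (qm ∩ qp) :=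
    ENNReal.toReal_pos hω.ne' (measure_ne_top_of_subset inter_subset_right hqpfin.ne)
  have hoverlap : μ.real (qm ∩ qp) * (setMean μ qp v - mm) ^ 2 ≤ 2 * (A + B) := by
    rw [sub_sq_comm]
    exact measureReal_inter_mul_sq_sub_le hqmfin.ne hqpfin.ne hvm hvp _ _
  calc ∫ x in qm ∪ qp, (v x - setMean μ (qm ∪ qp) v) ^ 2 ∂μ
      ≤ ∫ x in qm ∪ qp, (v x - mm) ^ 2 ∂μ :=
        setIntegral_sq_sub_setMean_le (measure_union_ne_top hqmfin.ne hqpfin.ne) hv mm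
    _ ≤ A + ∫ x in qp, (v x - mm) ^ 2 ∂μ :=
        setIntegral_union_le_add (fun x => sq_nonneg _)
          (integrableOn_sq_sub_const hqmfin.ne hvm mm)
          (integrableOn_sq_sub_const hqpfin.ne hvp mm)
    _ = A + B + μ.real qp * (setMean μ qp v - mm) ^ 2 := by
        rw [setIntegral_sq_sub_eq hqpfin.ne hvp mm, add_assoc]
    _ ≤ A + B + μ.real qp * (2 * (A + B) / μ.real (qm ∩ qp)) := by
        gcongr
        rw [le_div_iff₀ hW, mul_comm]
        exact hoverlap
    _ = _ := by simp only [Measure.real]; ring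

/-- Two-set overlapping step in the proof of the generalized parabolic
Poincaré inequality (Lemma 4.4): for sets `q⁻`, `q′` of finite positive
measure with overlap `ω = q⁻ ∩ q′` of positive measure and `q = q⁻ ∪ q′`,
`‖v − ⟨v⟩_q‖²_{L²(q)} ≤ (1 + 2 μ(q′)/μ(ω))
  ( ‖v − ⟨v⟩_{q⁻}‖²_{L²(q⁻)} + ‖v − ⟨v⟩_{q′}‖²_{L²(q′)} )`. -/
theorem stmt_4 {X : Type*} [MeasurableSpace X] (μ : Measure X)
    (qm qp : Set X) (hqmMeas : MeasurableSet qm) (hqpMeas : MeasurableSet qp)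
    (hqm0 : 0 < μ qm) (hqmfin : μ qm < ⊤)
    (hqp0 : 0 < μ qp) (hqpfin : μ qp < ⊤)
    (hω : 0 < μ (qm ∩ qp))
    (v : X → ℝ) (hv : MemLp v 2 (μ.restrict (qm ∪ qp))) :
    (∫ x in qm ∪ qp, (v x - setMean μ (qm ∪ qp) v) ^ 2 ∂μ)
      ≤ (1 + 2 * (μ qp).toReal / (μ (qm ∩ qp)).toReal) *
          ((∫ x in qm, (v x - setMean μ qm v) ^ 2 ∂μ)
            + ∫ x in qp, (v x - setMean μ qp v) ^ 2 ∂μ) :=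
  stmt_4_general μ qm qp hqmfin hqpfin hω v hv
end

section
/- Let L ∈ ℕ, κ ≥ 1, and C_x > 0. There exists a constant C > 0, depending only on L, κ, and C_x, with the following property. Let q₀, …, q_L ⊂ ℝ × ℝ^d be time-space cylinders q_ℓ = I_ℓ × D_ℓ, where each I_ℓ is a bounded interval and each D_ℓ ⊂ ℝ^d is a bounded measurable set of positive measure, such that for every j ∈ {1,…,L}: |q_j| ≤ κ · |q_j ∩ ⋃_{ℓ<j} q_ℓ| and |q_j ∩ ⋃_{ℓ<j} q_ℓ| > 0. Set q := ⋃_{ℓ=0}^{L} q_ℓ, let h_t be the diameter of the projection of q onto the time axis and h_x the diameter of the projection of q onto ℝ^d. Let v, g ∈ L²(q) be such that for each ℓ and almost every t ∈ I_ℓ: ‖v(t,·) − ⟨v(t,·)⟩_{D_ℓ}‖_{L²(D_ℓ)} ≤ C_x diam(D_ℓ) ‖g(t,·)‖_{L²(D_ℓ)}. Then ‖v − ⟨v⟩_q‖²_{L²(q)} ≤ C ( h_x² ‖g‖²_{L²(q)} + h_t |v|²_{H^{1/2}L²(q)} ). -/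
open MeasureTheory Set ENNReal

/-- The localized parabolic seminorm
`|v|²_{H^{1/2}L²(q)} = ∫_ℝ ∫_ℝ ∫_{ℝ^d} 1_q(t,x) 1_q(s,x)
  |v(t,x) − v(s,x)|² |t−s|⁻² dx ds dt`. -/
noncomputable def parSemi {d : ℕ} (q : Set (ℝ × (Fin d → ℝ)))
    (v : ℝ → (Fin d → ℝ) → ℝ) : ℝ≥0∞ :=
  ∫⁻ t : ℝ, ∫⁻ s : ℝ, ∫⁻ x : Fin d → ℝ,
    q.indicator (fun _ => (1 : ℝ≥0∞)) (t, x) *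
      q.indicator (fun _ => (1 : ℝ≥0∞)) (s, x) *
        ENNReal.ofReal ((v t x - v s x) ^ 2 / |t - s| ^ 2)

/-- The mean `⟨v⟩_q` of `v` over `q ⊆ ℝ × ℝ^d`. -/
noncomputable def parMean {d : ℕ} (q : Set (ℝ × (Fin d → ℝ)))
    (v : ℝ → (Fin d → ℝ) → ℝ) : ℝ :=
  (volume q).toReal⁻¹ * ∫ p in q, v p.1 p.2

/-!
Everything rests on the bias–variance identity for the squared deviation
`E(X) = ∫_X (f - ⨍_X f)²` (`sqDev`): `∫_X (f - c)² = E(X) + |X| (⨍_X f - c)²`.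
On a cylinder `I × D`, choosing for `c` the time average of the spatial averages
`w(t) = ⨍_D v(t, ·)` splits `E(I × D)` into the deviations of the slices `v(t, ·)`, which the
spatial Poincaré inequality controls, and `|D|` times the deviation of `w` on `I`. The latter
equals `(2|I|)⁻¹ ∫∫ |w(t) - w(s)|²`, and `|D| |w(t) - w(s)|² ≤ ∫_D |v(t, ·) - v(s, ·)|²`
by Jensen; since `I` is an interval, `|t - s|² ≤ h_t |I|` there, which yields the seminorm with
factor `h_t / 2`. Cylinders are then added one at a time: the averages over the union `S` so far
and over the next cylinder `T` are both close to the average over `T ∩ S`, and the overlap condition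
`|T| ≤ κ |T ∩ S|` turns this into `E(S ∪ T) ≤ (1 + 2κ) (E(S) + E(T))`.
-/

namespace MeasureTheory

variable {α : Type*} [MeasurableSpace α] {μ : Measure α} {f : α → ℝ}

noncomputable def sqDev (μ : Measure α) (f : α → ℝ) : ℝ :=
  ∫ a, (f a - ⨍ b, f b ∂μ) ^ 2 ∂μ

theorem sqDev_nonneg (μ : Measure α) (f : α → ℝ) : 0 ≤ sqDev μ f :=
  integral_nonneg fun _ => sq_nonneg _

theorem ofReal_integral_le_lintegral_ofReal (hf : 0 ≤ᵐ[μ] f) :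
    ENNReal.ofReal (∫ a, f a ∂μ) ≤ ∫⁻ a, ENNReal.ofReal (f a) ∂μ := by
  by_cases hi : Integrable f μ
  · exact (ofReal_integral_eq_lintegral_ofReal hi hf).le
  · simp [integral_undef hi]

section Finite

variable [IsFiniteMeasure μ]

theorem MemLp.integrable_sub_sq (hf : MemLp f 2 μ) (c : ℝ) :
    Integrable (fun a => (f a - c) ^ 2) μ :=
  (hf.sub (memLp_const c)).integrable_sq

theorem integral_sub_sq_eq_sqDev_add (hf : MemLp f 2 μ) (c : ℝ) :
    ∫ a, (f a - c) ^ 2 ∂μ = sqDev μ f + μ.real univ * (⨍ a, f a ∂μ - c) ^ 2 := by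
  have hf1 : Integrable f μ := hf.integrable one_le_two
  have hf2 : Integrable (fun a => f a ^ 2) μ := hf.integrable_sq
  have hexpand : ∀ c : ℝ, ∫ a, (f a - c) ^ 2 ∂μ
      = ∫ a, f a ^ 2 ∂μ - 2 * c * ∫ a, f a ∂μ + μ.real univ * c ^ 2 := fun c => by
    have hsq : ∀ a, (f a - c) ^ 2 = f a ^ 2 - 2 * c * f a + c ^ 2 := fun a => by ring
    have h : Integrable (fun a => f a ^ 2 - 2 * c * f a) μ := hf2.sub (hf1.const_mul _)
    simp only [hsq]
    rw [integral_add h (integrable_const _), integral_sub hf2 (hf1.const_mul _),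
      integral_const_mul, integral_const, smul_eq_mul]
  rw [sqDev, hexpand, hexpand, ← measure_smul_average μ f, smul_eq_mul]
  ring

theorem sqDev_le_integral_sub_sq (hf : MemLp f 2 μ) (c : ℝ) :
    sqDev μ f ≤ ∫ a, (f a - c) ^ 2 ∂μ := by
  rw [integral_sub_sq_eq_sqDev_add hf c]
  have : 0 ≤ μ.real univ := measureReal_nonneg
  nlinarith [sq_nonneg (⨍ a, f a ∂μ - c)]

theorem measureReal_mul_sq_average_sub_le (hf : MemLp f 2 μ) (c : ℝ) :
    μ.real univ * (⨍ a, f a ∂μ - c) ^ 2 ≤ ∫ a, (f a - c) ^ 2 ∂μ := by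
  rw [integral_sub_sq_eq_sqDev_add hf c]
  linarith [sqDev_nonneg μ f]

theorem sq_average_le (hf : MemLp f 2 μ) :
    (⨍ a, f a ∂μ) ^ 2 ≤ (μ.real univ)⁻¹ * ∫ a, f a ^ 2 ∂μ := by
  rcases eq_or_ne μ 0 with rfl | hμ
  · simp
  have : NeZero μ := ⟨hμ⟩
  rw [le_inv_mul_iff₀ measureReal_univ_pos]
  simpa using measureReal_mul_sq_average_sub_le hf 0

theorem measureReal_mul_sq_average_sub_average_le {g : α → ℝ} (hf : MemLp f 2 μ)
    (hg : MemLp g 2 μ) :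
    μ.real univ * (⨍ a, f a ∂μ - ⨍ a, g a ∂μ) ^ 2 ≤ ∫ a, (f a - g a) ^ 2 ∂μ := by
  have hsub : ⨍ a, (f a - g a) ∂μ = ⨍ a, f a ∂μ - ⨍ a, g a ∂μ := by
    simp only [average_eq, smul_eq_mul]
    rw [integral_sub (hf.integrable one_le_two) (hg.integrable one_le_two)]
    ring
  simpa [hsub] using measureReal_mul_sq_average_sub_le (hf.sub hg) 0

theorem sqDev_eq_integral_integral (hf : MemLp f 2 μ) :
    sqDev μ f = (2 * μ.real univ)⁻¹ * ∫ a, ∫ b, (f a - f b) ^ 2 ∂μ ∂μ := by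
  rcases eq_or_ne μ 0 with rfl | hμ
  · simp [sqDev]
  have : NeZero μ := ⟨hμ⟩
  have := measureReal_univ_ne_zero (μ := μ)
  have hinner : ∀ a, ∫ b, (f a - f b) ^ 2 ∂μ
      = sqDev μ f + μ.real univ * (f a - ⨍ b, f b ∂μ) ^ 2 := fun a => by
    simp only [sub_sq_comm (f a)]
    rw [integral_sub_sq_eq_sqDev_add hf (f a)]
  rw [integral_congr_ae (Filter.Eventually.of_forall hinner),
    integral_add (integrable_const _) ((hf.integrable_sub_sq _).const_mul _),
    integral_const_mul, integral_const, smul_eq_mul, ← sqDev]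
  field_simp
  ring

theorem ofReal_sqDev_le_lintegral_lintegral (hf : MemLp f 2 μ) :
    ENNReal.ofReal (sqDev μ f)
      ≤ ENNReal.ofReal (2 * μ.real univ)⁻¹ *
        ∫⁻ a, ∫⁻ b, ENNReal.ofReal ((f a - f b) ^ 2) ∂μ ∂μ := by
  rw [sqDev_eq_integral_integral hf, ENNReal.ofReal_mul (by positivity)]
  gcongr
  exact (ofReal_integral_le_lintegral_ofReal (Filter.Eventually.of_forall fun _ =>
      integral_nonneg fun _ => sq_nonneg _)).trans
    (lintegral_mono fun a => ofReal_integral_le_lintegral_ofReal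
      (Filter.Eventually.of_forall fun _ => sq_nonneg _))

end Finite

theorem measureReal_mul_sq_setAverage_sub_le {P X : Set α} (hPX : P ⊆ X) (hX : μ X ≠ ∞)
    (hf : MemLp f 2 (μ.restrict X)) (c : ℝ) :
    μ.real P * (⨍ a in P, f a ∂μ - c) ^ 2 ≤ ∫ a in X, (f a - c) ^ 2 ∂μ := by
  have : IsFiniteMeasure (μ.restrict X) := isFiniteMeasure_restrict.2 hX
  have : IsFiniteMeasure (μ.restrict P) :=
    isFiniteMeasure_restrict.2 ((measure_mono hPX).trans_lt hX.lt_top).ne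
  calc μ.real P * (⨍ a in P, f a ∂μ - c) ^ 2 ≤ ∫ a in P, (f a - c) ^ 2 ∂μ := by
        simpa using measureReal_mul_sq_average_sub_le
          (hf.mono_measure (Measure.restrict_mono hPX le_rfl)) c
    _ ≤ ∫ a in X, (f a - c) ^ 2 ∂μ :=
        setIntegral_mono_set (hf.integrable_sub_sq c)
          (Filter.Eventually.of_forall fun _ => sq_nonneg _) hPX.eventuallyLE

theorem measureReal_mul_sq_setAverage_sub_setAverage_le {S T : Set α} {κ : ℝ} (hκ : 0 ≤ κ)
    (hS : μ S ≠ ∞) (hT : μ T ≠ ∞) (hST : μ T ≤ ENNReal.ofReal κ * μ (T ∩ S))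
    (hfS : MemLp f 2 (μ.restrict S)) (hfT : MemLp f 2 (μ.restrict T)) :
    μ.real T * (⨍ a in T, f a ∂μ - ⨍ a in S, f a ∂μ) ^ 2
      ≤ 2 * κ * (sqDev (μ.restrict S) f + sqDev (μ.restrict T) f) := by
  set mS := ⨍ a in S, f a ∂μ
  set mT := ⨍ a in T, f a ∂μ
  set mP := ⨍ a in T ∩ S, f a ∂μ
  have hPT : μ.real (T ∩ S) * (mP - mT) ^ 2 ≤ sqDev (μ.restrict T) f :=
    measureReal_mul_sq_setAverage_sub_le inter_subset_left hT hfT mT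
  have hPS : μ.real (T ∩ S) * (mP - mS) ^ 2 ≤ sqDev (μ.restrict S) f :=
    measureReal_mul_sq_setAverage_sub_le inter_subset_right hS hfS mS
  have hκP : μ.real T ≤ κ * μ.real (T ∩ S) := by
    have := ENNReal.toReal_mono (ENNReal.mul_ne_top ENNReal.ofReal_ne_top
      ((measure_mono inter_subset_left).trans_lt hT.lt_top).ne) hST
    rwa [ENNReal.toReal_mul, ENNReal.toReal_ofReal hκ] at this
  have hsq : (mT - mS) ^ 2 ≤ 2 * ((mP - mT) ^ 2 + (mP - mS) ^ 2) := by
    nlinarith [sq_nonneg (mP - mT + (mP - mS))]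
  calc μ.real T * (mT - mS) ^ 2
      ≤ κ * μ.real (T ∩ S) * (2 * ((mP - mT) ^ 2 + (mP - mS) ^ 2)) :=
        mul_le_mul hκP hsq (sq_nonneg _) (by positivity)
    _ ≤ 2 * κ * (sqDev (μ.restrict S) f + sqDev (μ.restrict T) f) := by nlinarith

theorem sqDev_restrict_union_le {S T : Set α} {κ : ℝ} (hκ : 0 ≤ κ) (hS : μ S ≠ ∞)
    (hT : μ T ≠ ∞) (hST : μ T ≤ ENNReal.ofReal κ * μ (T ∩ S))
    (hf : MemLp f 2 (μ.restrict (S ∪ T))) :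
    sqDev (μ.restrict (S ∪ T)) f
      ≤ (1 + 2 * κ) * (sqDev (μ.restrict S) f + sqDev (μ.restrict T) f) := by
  have : IsFiniteMeasure (μ.restrict S) := isFiniteMeasure_restrict.2 hS
  have : IsFiniteMeasure (μ.restrict T) := isFiniteMeasure_restrict.2 hT
  have : IsFiniteMeasure (μ.restrict (S ∪ T)) :=
    isFiniteMeasure_restrict.2 (measure_union_ne_top hS hT)
  have hfS : MemLp f 2 (μ.restrict S) :=
    hf.mono_measure (Measure.restrict_mono subset_union_left le_rfl)
  have hfT : MemLp f 2 (μ.restrict T) :=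
    hf.mono_measure (Measure.restrict_mono subset_union_right le_rfl)
  set mS := ⨍ a in S, f a ∂μ
  have hunion : ∫ a in S ∪ T, (f a - mS) ^ 2 ∂μ
      ≤ ∫ a in S, (f a - mS) ^ 2 ∂μ + ∫ a in T, (f a - mS) ^ 2 ∂μ := by
    rw [← integral_add_measure (hfS.integrable_sub_sq mS) (hfT.integrable_sub_sq mS)]
    exact integral_mono_measure (Measure.restrict_union_le S T)
      (Filter.Eventually.of_forall fun _ => sq_nonneg _)
      ((hfS.integrable_sub_sq mS).add_measure (hfT.integrable_sub_sq mS))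
  have hsplit : ∫ a in T, (f a - mS) ^ 2 ∂μ
      = sqDev (μ.restrict T) f + μ.real T * (⨍ a in T, f a ∂μ - mS) ^ 2 := by
    simpa using integral_sub_sq_eq_sqDev_add hfT mS
  have hdist := measureReal_mul_sq_setAverage_sub_setAverage_le hκ hS hT hST hfS hfT
  have hS0 := sqDev_nonneg (μ.restrict S) f
  have hT0 := sqDev_nonneg (μ.restrict T) f
  calc sqDev (μ.restrict (S ∪ T)) f ≤ ∫ a in S ∪ T, (f a - mS) ^ 2 ∂μ :=
        sqDev_le_integral_sub_sq hf mS
    _ ≤ sqDev (μ.restrict S) f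
          + (sqDev (μ.restrict T) f + μ.real T * (⨍ a in T, f a ∂μ - mS) ^ 2) := by
        rw [← hsplit]; exact hunion
    _ ≤ (1 + 2 * κ) * (sqDev (μ.restrict S) f + sqDev (μ.restrict T) f) := by linarith

theorem sqDev_restrict_biUnion_range_le {X : ℕ → Set α} {κ : ℝ} (hκ : 0 ≤ κ) (L : ℕ)
    (hX : ∀ ℓ ≤ L, μ (X ℓ) ≠ ∞)
    (hov : ∀ j, 1 ≤ j → j ≤ L →
      μ (X j) ≤ ENNReal.ofReal κ * μ (X j ∩ ⋃ ℓ ∈ Finset.range j, X ℓ))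
    (hf : MemLp f 2 (μ.restrict (⋃ ℓ ∈ Finset.range (L + 1), X ℓ))) :
    sqDev (μ.restrict (⋃ ℓ ∈ Finset.range (L + 1), X ℓ)) f
      ≤ (1 + 2 * κ) ^ L * ∑ ℓ ∈ Finset.range (L + 1), sqDev (μ.restrict (X ℓ)) f := by
  induction L with
  | zero => simp
  | succ L ih =>
    have hunion : ⋃ ℓ ∈ Finset.range (L + 1 + 1), X ℓ
        = (⋃ ℓ ∈ Finset.range (L + 1), X ℓ) ∪ X (L + 1) := by
      rw [Finset.range_add_one, Finset.set_biUnion_insert, union_comm]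
    rw [hunion] at hf ⊢
    have hS : μ (⋃ ℓ ∈ Finset.range (L + 1), X ℓ) ≠ ∞ :=
      (measure_biUnion_lt_top (Finset.range (L + 1)).finite_toSet fun ℓ hℓ =>
        (hX ℓ (by simp at hℓ; omega)).lt_top).ne
    have ih' := ih (fun ℓ hℓ => hX ℓ (by omega)) (fun j h₁ h₂ => hov j h₁ (by omega))
      (hf.mono_measure (Measure.restrict_mono subset_union_left le_rfl))
    have hpow : 1 ≤ (1 + 2 * κ) ^ L := one_le_pow₀ (by linarith)
    calc _ ≤ (1 + 2 * κ) * (sqDev (μ.restrict (⋃ ℓ ∈ Finset.range (L + 1), X ℓ)) f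
            + sqDev (μ.restrict (X (L + 1))) f) :=
          sqDev_restrict_union_le hκ hS (hX _ le_rfl) (hov (L + 1) (by omega) le_rfl) hf
      _ ≤ (1 + 2 * κ) *
            ((1 + 2 * κ) ^ L * ∑ ℓ ∈ Finset.range (L + 1), sqDev (μ.restrict (X ℓ)) f
              + (1 + 2 * κ) ^ L * sqDev (μ.restrict (X (L + 1))) f) := by
          gcongr
          exact le_mul_of_one_le_left (sqDev_nonneg _ _) hpow
      _ = _ := by rw [Finset.sum_range_succ _ (L + 1)]; ring

theorem ofReal_sqDev_restrict_biUnion_range_le {X : ℕ → Set α} {κ : ℝ} {B : ℝ≥0∞}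
    (hκ : 0 ≤ κ) (L : ℕ) (hX : ∀ ℓ ≤ L, μ (X ℓ) ≠ ∞)
    (hov : ∀ j, 1 ≤ j → j ≤ L →
      μ (X j) ≤ ENNReal.ofReal κ * μ (X j ∩ ⋃ ℓ ∈ Finset.range j, X ℓ))
    (hf : MemLp f 2 (μ.restrict (⋃ ℓ ∈ Finset.range (L + 1), X ℓ)))
    (hB : ∀ ℓ ≤ L, ENNReal.ofReal (sqDev (μ.restrict (X ℓ)) f) ≤ B) :
    ENNReal.ofReal (sqDev (μ.restrict (⋃ ℓ ∈ Finset.range (L + 1), X ℓ)) f)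
      ≤ ENNReal.ofReal ((1 + 2 * κ) ^ L * (L + 1)) * B := by
  calc _ ≤ ENNReal.ofReal ((1 + 2 * κ) ^ L) *
        ∑ ℓ ∈ Finset.range (L + 1), ENNReal.ofReal (sqDev (μ.restrict (X ℓ)) f) := by
        rw [← ENNReal.ofReal_sum_of_nonneg fun ℓ _ => sqDev_nonneg _ _,
          ← ENNReal.ofReal_mul (by positivity)]
        exact ENNReal.ofReal_le_ofReal (sqDev_restrict_biUnion_range_le hκ L hX hov hf)
    _ ≤ ENNReal.ofReal ((1 + 2 * κ) ^ L) * ∑ ℓ ∈ Finset.range (L + 1), B := by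
        gcongr with ℓ hℓ
        exact hB ℓ (by simpa [Nat.lt_succ_iff] using hℓ)
    _ = _ := by
        rw [Finset.sum_const, Finset.card_range, nsmul_eq_mul, ENNReal.ofReal_mul (by positivity),
          ← Nat.cast_add_one, ENNReal.ofReal_natCast]
        ring

section Prod

variable {β : Type*} [MeasurableSpace β] {ν : Measure β} {F : α × β → ℝ}

theorem MemLp.ae_memLp_prodMk [SFinite μ] [SFinite ν] (hF : MemLp F 2 (μ.prod ν)) :
    ∀ᵐ a ∂μ, MemLp (fun b => F (a, b)) 2 ν := by
  filter_upwards [hF.aestronglyMeasurable.prodMk_left, hF.integrable_sq.prod_right_ae]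
    with a hmeas hsq
  exact (memLp_two_iff_integrable_sq hmeas).2 hsq

variable [IsFiniteMeasure μ] [IsFiniteMeasure ν]

theorem MemLp.memLp_average_prodMk (hF : MemLp F 2 (μ.prod ν)) :
    MemLp (fun a => ⨍ b, F (a, b) ∂ν) 2 μ := by
  have hmeas : AEStronglyMeasurable (fun a => ⨍ b, F (a, b) ∂ν) μ := by
    simp only [average_eq]
    exact hF.aestronglyMeasurable.integral_prod_right'.const_smul (ν.real univ)⁻¹
  refine (memLp_two_iff_integrable_sq hmeas).2 <|
    (hF.integrable_sq.integral_prod_left.const_mul (ν.real univ)⁻¹).mono' (hmeas.pow 2) ?_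
  filter_upwards [hF.ae_memLp_prodMk] with a ha
  rw [Real.norm_of_nonneg (sq_nonneg _)]
  exact sq_average_le ha

theorem ofReal_sqDev_prod_le (hF : MemLp F 2 (μ.prod ν)) :
    ENNReal.ofReal (sqDev (μ.prod ν) F)
      ≤ ∫⁻ a, ENNReal.ofReal (sqDev ν fun b => F (a, b)) ∂μ
        + ENNReal.ofReal (2 * μ.real univ)⁻¹ *
          ∫⁻ a, ∫⁻ a', ∫⁻ b, ENNReal.ofReal ((F (a, b) - F (a', b)) ^ 2) ∂ν ∂μ ∂μ := by
  set W := fun a => ⨍ b, F (a, b) ∂ν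
  set c := ⨍ a, W a ∂μ
  have hslice := hF.ae_memLp_prodMk
  have hW : MemLp W 2 μ := hF.memLp_average_prodMk
  have hsplit : ENNReal.ofReal (∫ z, (F z - c) ^ 2 ∂μ.prod ν)
      = ∫⁻ a, ENNReal.ofReal (sqDev ν fun b => F (a, b)) ∂μ
        + ENNReal.ofReal (ν.real univ) * ∫⁻ a, ENNReal.ofReal ((W a - c) ^ 2) ∂μ := by
    rw [ofReal_integral_eq_lintegral_ofReal (hF.integrable_sub_sq c)
        (Filter.Eventually.of_forall fun _ => sq_nonneg _),
      lintegral_prod _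
        ((hF.aestronglyMeasurable.aemeasurable.sub_const c).pow_const 2).ennreal_ofReal,
      ← lintegral_const_mul' _ _ ENNReal.ofReal_ne_top,
      ← lintegral_add_right' _ (((hW.aestronglyMeasurable.aemeasurable.sub_const c).pow_const
        2).ennreal_ofReal.const_mul _)]
    refine lintegral_congr_ae ?_
    filter_upwards [hslice] with a ha
    rw [← ofReal_integral_eq_lintegral_ofReal (ha.integrable_sub_sq c)
        (Filter.Eventually.of_forall fun _ => sq_nonneg _),
      integral_sub_sq_eq_sqDev_add ha c, ENNReal.ofReal_add (sqDev_nonneg _ _) (by positivity),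
      ENNReal.ofReal_mul measureReal_nonneg]
  have htime : ∫⁻ a, ENNReal.ofReal ((W a - c) ^ 2) ∂μ
      ≤ ENNReal.ofReal (2 * μ.real univ)⁻¹ *
        ∫⁻ a, ∫⁻ a', ENNReal.ofReal ((W a - W a') ^ 2) ∂μ ∂μ := by
    rw [← ofReal_integral_eq_lintegral_ofReal (hW.integrable_sub_sq c)
        (Filter.Eventually.of_forall fun _ => sq_nonneg _)]
    exact ofReal_sqDev_le_lintegral_lintegral hW
  have hspace :
      ENNReal.ofReal (ν.real univ) * ∫⁻ a, ∫⁻ a', ENNReal.ofReal ((W a - W a') ^ 2) ∂μ ∂μ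
      ≤ ∫⁻ a, ∫⁻ a', ∫⁻ b, ENNReal.ofReal ((F (a, b) - F (a', b)) ^ 2) ∂ν ∂μ ∂μ := by
    rw [← lintegral_const_mul' _ _ ENNReal.ofReal_ne_top]
    refine lintegral_mono_ae ?_
    filter_upwards [hslice] with a ha
    rw [← lintegral_const_mul' _ _ ENNReal.ofReal_ne_top]
    refine lintegral_mono_ae ?_
    filter_upwards [hslice] with a' ha'
    rw [← ENNReal.ofReal_mul measureReal_nonneg]
    exact (ENNReal.ofReal_le_ofReal (measureReal_mul_sq_average_sub_average_le ha ha')).trans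
      (ofReal_integral_le_lintegral_ofReal (Filter.Eventually.of_forall fun _ => sq_nonneg _))
  calc ENNReal.ofReal (sqDev (μ.prod ν) F)
      ≤ ENNReal.ofReal (∫ z, (F z - c) ^ 2 ∂μ.prod ν) :=
        ENNReal.ofReal_le_ofReal (sqDev_le_integral_sub_sq hF c)
    _ ≤ _ := by
        rw [hsplit]
        refine add_le_add le_rfl ?_
        calc ENNReal.ofReal (ν.real univ) * ∫⁻ a, ENNReal.ofReal ((W a - c) ^ 2) ∂μ
            ≤ ENNReal.ofReal (ν.real univ) * (ENNReal.ofReal (2 * μ.real univ)⁻¹ *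
              ∫⁻ a, ∫⁻ a', ENNReal.ofReal ((W a - W a') ^ 2) ∂μ ∂μ) := by gcongr
          _ = ENNReal.ofReal (2 * μ.real univ)⁻¹ * (ENNReal.ofReal (ν.real univ) *
              ∫⁻ a, ∫⁻ a', ENNReal.ofReal ((W a - W a') ^ 2) ∂μ ∂μ) := by ring
          _ ≤ _ := by gcongr

end Prod

end MeasureTheory

section Parabolic

variable {d : ℕ} {v g : ℝ → (Fin d → ℝ) → ℝ} {A : Set ℝ} {D : Set (Fin d → ℝ)}

theorem parSemi_mono {q q' : Set (ℝ × (Fin d → ℝ))} (h : q ⊆ q') :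
    parSemi q v ≤ parSemi q' v := by
  unfold parSemi
  gcongr with t s x

theorem lintegral_cylinder_le_parSemi (hA : MeasurableSet A) (hD : MeasurableSet D) :
    ∫⁻ t in A, ∫⁻ s in A, ∫⁻ x in D, ENNReal.ofReal ((v t x - v s x) ^ 2 / |t - s| ^ 2)
      ≤ parSemi (A ×ˢ D) v := by
  refine (setLIntegral_mono' hA fun t ht => ?_).trans (setLIntegral_le_lintegral _ _)
  refine (setLIntegral_mono' hA fun s hs => ?_).trans (setLIntegral_le_lintegral _ _)
  refine (setLIntegral_mono' hD fun x hx => ?_).trans (setLIntegral_le_lintegral _ _)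
  simp [indicator_of_mem (mk_mem_prod ht hx), indicator_of_mem (mk_mem_prod hs hx)]

theorem Set.OrdConnected.abs_sub_le_volume_real (hA : A.OrdConnected) (hAfin : volume A ≠ ∞)
    {t s : ℝ} (ht : t ∈ A) (hs : s ∈ A) : |t - s| ≤ volume.real A := by
  have h := ENNReal.toReal_mono hAfin (measure_mono (hA.uIcc_subset ht hs))
  rwa [Real.volume_interval, ENNReal.toReal_ofReal (abs_nonneg _), abs_sub_comm] at h

theorem sq_sub_le_mul_div_sq_abs_sub (hAc : A.OrdConnected) (hAfin : volume A ≠ ∞) {δ : ℝ}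
    (hδ : ∀ t ∈ A, ∀ s ∈ A, |t - s| ≤ δ) {t s : ℝ} (ht : t ∈ A) (hs : s ∈ A) (u : ℝ → ℝ) :
    (u t - u s) ^ 2 ≤ δ * volume.real A * ((u t - u s) ^ 2 / |t - s| ^ 2) := by
  rcases eq_or_ne t s with rfl | hts
  · simp
  have hpos : 0 < |t - s| ^ 2 := by positivity [sub_ne_zero.2 hts]
  have hsq : |t - s| ^ 2 ≤ δ * volume.real A := by
    rw [sq]
    exact mul_le_mul (hδ t ht s hs) (hAc.abs_sub_le_volume_real hAfin ht hs)
      (abs_nonneg _) ((abs_nonneg _).trans (hδ t ht s hs))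
  rw [mul_div_assoc', le_div_iff₀ hpos]
  nlinarith [mul_le_mul_of_nonneg_left hsq (sq_nonneg (u t - u s))]

theorem lintegral_cylinder_sq_sub_le_parSemi (hA : MeasurableSet A) (hAc : A.OrdConnected)
    (hAfin : volume A ≠ ∞) (hD : MeasurableSet D) {δ : ℝ}
    (hδ : ∀ t ∈ A, ∀ s ∈ A, |t - s| ≤ δ) :
    ENNReal.ofReal (2 * volume.real A)⁻¹ *
        ∫⁻ t in A, ∫⁻ s in A, ∫⁻ x in D, ENNReal.ofReal ((v t x - v s x) ^ 2)
      ≤ ENNReal.ofReal (δ / 2) * parSemi (A ×ˢ D) v := by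
  rcases eq_or_ne (volume.real A) 0 with hA0 | hA0
  · simp [hA0]
  calc ENNReal.ofReal (2 * volume.real A)⁻¹ *
        ∫⁻ t in A, ∫⁻ s in A, ∫⁻ x in D, ENNReal.ofReal ((v t x - v s x) ^ 2)
      ≤ ENNReal.ofReal (2 * volume.real A)⁻¹ * (ENNReal.ofReal (δ * volume.real A) *
        ∫⁻ t in A, ∫⁻ s in A, ∫⁻ x in D,
          ENNReal.ofReal ((v t x - v s x) ^ 2 / |t - s| ^ 2)) := by
        gcongr
        simp only [← lintegral_const_mul' _ _ ENNReal.ofReal_ne_top]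
        refine setLIntegral_mono' hA fun t ht => setLIntegral_mono' hA fun s hs =>
          lintegral_mono fun x => ?_
        rw [← ENNReal.ofReal_mul' (by positivity)]
        exact ENNReal.ofReal_le_ofReal (sq_sub_le_mul_div_sq_abs_sub hAc hAfin hδ ht hs (v · x))
    _ ≤ ENNReal.ofReal (δ / 2) * parSemi (A ×ˢ D) v := by
        rw [← mul_assoc, ← ENNReal.ofReal_mul (by positivity)]
        gcongr
        · exact le_of_eq (by field_simp)
        · exact lintegral_cylinder_le_parSemi hA hD

theorem ofReal_sqDev_cylinder_le (hA : MeasurableSet A) (hAc : A.OrdConnected)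
    (hAfin : volume A ≠ ∞) (hD : MeasurableSet D) (hDfin : volume D ≠ ∞) {δ K : ℝ}
    (hδ : ∀ t ∈ A, ∀ s ∈ A, |t - s| ≤ δ) (hK : 0 ≤ K)
    (hv : MemLp (fun p : ℝ × (Fin d → ℝ) => v p.1 p.2) 2 (volume.restrict (A ×ˢ D)))
    (hg : AEStronglyMeasurable (fun p : ℝ × (Fin d → ℝ) => g p.1 p.2)
      (volume.restrict (A ×ˢ D)))
    (hPoin : ∀ᵐ t ∂volume.restrict A,
      sqDev (volume.restrict D) (v t) ≤ K * ∫ x in D, g t x ^ 2) :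
    ENNReal.ofReal (sqDev (volume.restrict (A ×ˢ D)) fun p => v p.1 p.2)
      ≤ ENNReal.ofReal K * (∫⁻ p in A ×ˢ D, ENNReal.ofReal (g p.1 p.2 ^ 2))
        + ENNReal.ofReal (δ / 2) * parSemi (A ×ˢ D) v := by
  have : IsFiniteMeasure (volume.restrict A) := isFiniteMeasure_restrict.2 hAfin
  have : IsFiniteMeasure (volume.restrict D) := isFiniteMeasure_restrict.2 hDfin
  have hprod : volume.restrict (A ×ˢ D) = (volume.restrict A).prod (volume.restrict D) := by
    rw [Measure.volume_eq_prod, Measure.prod_restrict]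
  rw [hprod] at hv hg ⊢
  refine (ofReal_sqDev_prod_le hv).trans (add_le_add ?_ ?_)
  · rw [lintegral_prod _ (hg.aemeasurable.pow_const 2).ennreal_ofReal,
      ← lintegral_const_mul' _ _ ENNReal.ofReal_ne_top]
    refine lintegral_mono_ae ?_
    filter_upwards [hPoin] with t ht
    calc ENNReal.ofReal (sqDev (volume.restrict D) (v t))
        ≤ ENNReal.ofReal K * ENNReal.ofReal (∫ x in D, g t x ^ 2) := by
          rw [← ENNReal.ofReal_mul hK]; exact ENNReal.ofReal_le_ofReal ht
      _ ≤ _ := by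
          gcongr
          exact ofReal_integral_le_lintegral_ofReal
            (Filter.Eventually.of_forall fun _ => sq_nonneg _)
  · simpa only [measureReal_restrict_apply_univ] using
      lintegral_cylinder_sq_sub_le_parSemi hA hAc hAfin hD hδ

theorem ofReal_sqDev_cylinder_le_diam {q : Set (ℝ × (Fin d → ℝ))}
    (hq : Bornology.IsBounded q) (hsub : A ×ˢ D ⊆ q) (hA : MeasurableSet A)
    (hAc : A.OrdConnected) (hD : MeasurableSet D) {Cx : ℝ}
    (hv : MemLp (fun p : ℝ × (Fin d → ℝ) => v p.1 p.2) 2 (volume.restrict q))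
    (hg : MemLp (fun p : ℝ × (Fin d → ℝ) => g p.1 p.2) 2 (volume.restrict q))
    (hPoin : ∀ᵐ t ∂volume.restrict A,
      (∫ x in D, (v t x - (volume D).toReal⁻¹ * ∫ y in D, v t y) ^ 2)
        ≤ (Cx * Metric.diam D) ^ 2 * ∫ x in D, g t x ^ 2) :
    ENNReal.ofReal (sqDev (volume.restrict (A ×ˢ D)) fun p => v p.1 p.2)
      ≤ ENNReal.ofReal (Cx ^ 2 + 1) *
        (ENNReal.ofReal (Metric.diam (Prod.snd '' q) ^ 2) *
            (∫⁻ p in q, ENNReal.ofReal (g p.1 p.2 ^ 2))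
          + ENNReal.ofReal (Metric.diam (Prod.fst '' q)) * parSemi q v) := by
  rcases (A ×ˢ D).eq_empty_or_nonempty with hAD | ⟨⟨t₀, x₀⟩, ht₀, hx₀⟩
  · simp [hAD, sqDev]
  have hAq : A ⊆ Prod.fst '' q := fun t ht => ⟨(t, x₀), hsub ⟨ht, hx₀⟩, rfl⟩
  have hDq : D ⊆ Prod.snd '' q := fun x hx => ⟨(t₀, x), hsub ⟨ht₀, hx⟩, rfl⟩
  have hδ : ∀ t ∈ A, ∀ s ∈ A, |t - s| ≤ Metric.diam (Prod.fst '' q) := fun t ht s hs =>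
    Metric.dist_le_diam_of_mem hq.image_fst (hAq ht) (hAq hs)
  have hPoin' : ∀ᵐ t ∂volume.restrict A,
      sqDev (volume.restrict D) (v t) ≤ (Cx * Metric.diam D) ^ 2 * ∫ x in D, g t x ^ 2 := by
    simpa only [sqDev, setAverage_eq, measureReal_def, smul_eq_mul] using hPoin
  have hrestrict : volume.restrict (A ×ˢ D) ≤ volume.restrict q :=
    Measure.restrict_mono hsub le_rfl
  refine (ofReal_sqDev_cylinder_le hA hAc ((hq.image_fst.subset hAq).measure_lt_top.ne) hD
    ((hq.image_snd.subset hDq).measure_lt_top.ne) hδ (sq_nonneg _) (hv.mono_measure hrestrict)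
    (hg.aestronglyMeasurable.mono_measure hrestrict) hPoin').trans ?_
  have hdiam : Metric.diam D ≤ Metric.diam (Prod.snd '' q) := Metric.diam_mono hDq hq.image_snd
  rw [mul_add, ← mul_assoc, ← mul_assoc, ← ENNReal.ofReal_mul (by positivity),
    ← ENNReal.ofReal_mul (by positivity)]
  gcongr ENNReal.ofReal ?_ * ?_ + ENNReal.ofReal ?_ * ?_
  · have hsq := pow_le_pow_left₀ Metric.diam_nonneg hdiam 2
    nlinarith [mul_le_mul_of_nonneg_left hsq (sq_nonneg Cx),
      sq_nonneg (Metric.diam (Prod.snd '' q))]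
  · exact lintegral_mono_set hsub
  · have := Metric.diam_nonneg (s := Prod.fst '' q)
    nlinarith [sq_nonneg Cx]
  · exact parSemi_mono hsub

end Parabolic

theorem stmt_6_general (L : ℕ) (κ Cx : ℝ) (hκ : 1 ≤ κ) :
    ∃ C : ℝ, 0 < C ∧
      ∀ (d : ℕ) (I : ℕ → Set ℝ) (D : ℕ → Set (Fin d → ℝ)),
        (∀ ℓ ≤ L, Bornology.IsBounded (I ℓ) ∧ (I ℓ).OrdConnected ∧
          MeasurableSet (I ℓ)) →
        (∀ ℓ ≤ L, Bornology.IsBounded (D ℓ) ∧ MeasurableSet (D ℓ) ∧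
          0 < volume (D ℓ)) →
        (∀ j, 1 ≤ j → j ≤ L →
          0 < volume ((I j ×ˢ D j) ∩ ⋃ ℓ ∈ Finset.range j, I ℓ ×ˢ D ℓ) ∧
          volume (I j ×ˢ D j)
            ≤ ENNReal.ofReal κ *
                volume ((I j ×ˢ D j) ∩ ⋃ ℓ ∈ Finset.range j, I ℓ ×ˢ D ℓ)) →
        ∀ v g : ℝ → (Fin d → ℝ) → ℝ,
          MemLp (fun p : ℝ × (Fin d → ℝ) => v p.1 p.2) 2
            (volume.restrict (⋃ ℓ ∈ Finset.range (L + 1), I ℓ ×ˢ D ℓ)) →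
          MemLp (fun p : ℝ × (Fin d → ℝ) => g p.1 p.2) 2
            (volume.restrict (⋃ ℓ ∈ Finset.range (L + 1), I ℓ ×ˢ D ℓ)) →
          (∀ ℓ ≤ L, ∀ᵐ t ∂(volume.restrict (I ℓ)),
            (∫ x in D ℓ, (v t x - (volume (D ℓ)).toReal⁻¹ * ∫ y in D ℓ, v t y) ^ 2)
              ≤ (Cx * Metric.diam (D ℓ)) ^ 2 * ∫ x in D ℓ, g t x ^ 2) →
          (∫⁻ p in ⋃ ℓ ∈ Finset.range (L + 1), I ℓ ×ˢ D ℓ,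
              ENNReal.ofReal
                ((v p.1 p.2 - parMean (⋃ ℓ ∈ Finset.range (L + 1), I ℓ ×ˢ D ℓ) v) ^ 2))
            ≤ ENNReal.ofReal C *
                (ENNReal.ofReal
                    (Metric.diam (Prod.snd '' ⋃ ℓ ∈ Finset.range (L + 1), I ℓ ×ˢ D ℓ) ^ 2) *
                    (∫⁻ p in ⋃ ℓ ∈ Finset.range (L + 1), I ℓ ×ˢ D ℓ,
                      ENNReal.ofReal (g p.1 p.2 ^ 2))
                  + ENNReal.ofReal
                      (Metric.diam (Prod.fst '' ⋃ ℓ ∈ Finset.range (L + 1), I ℓ ×ˢ D ℓ)) *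
                      parSemi (⋃ ℓ ∈ Finset.range (L + 1), I ℓ ×ˢ D ℓ) v) := by
  refine ⟨(1 + 2 * κ) ^ L * (L + 1) * (Cx ^ 2 + 1), by positivity, ?_⟩
  intro d I D hI hD hov v g hv hg hPoin
  set Q := ⋃ ℓ ∈ Finset.range (L + 1), I ℓ ×ˢ D ℓ
  have hsub : ∀ ℓ ≤ L, I ℓ ×ˢ D ℓ ⊆ Q := fun ℓ hℓ =>
    subset_biUnion_of_mem (u := fun ℓ => I ℓ ×ˢ D ℓ) (by simpa [Nat.lt_succ_iff] using hℓ)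
  have hbdd : ∀ ℓ ≤ L, Bornology.IsBounded (I ℓ ×ˢ D ℓ) := fun ℓ hℓ =>
    (hI ℓ hℓ).1.prod (hD ℓ hℓ).1
  have hQ : Bornology.IsBounded Q := (Bornology.isBounded_biUnion_finset _).2 fun ℓ hℓ =>
    hbdd ℓ (by simpa [Nat.lt_succ_iff] using hℓ)
  have : IsFiniteMeasure (volume.restrict Q) := isFiniteMeasure_restrict.2 hQ.measure_lt_top.ne
  have hmean : parMean Q v = ⨍ p in Q, v p.1 p.2 := by
    rw [setAverage_eq, measureReal_def, smul_eq_mul, parMean]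
  rw [hmean, ← ofReal_integral_eq_lintegral_ofReal (hv.integrable_sub_sq _)
    (Filter.Eventually.of_forall fun _ => sq_nonneg _), ENNReal.ofReal_mul (by positivity),
    mul_assoc]
  exact ofReal_sqDev_restrict_biUnion_range_le (by linarith) L
    (fun ℓ hℓ => (hbdd ℓ hℓ).measure_lt_top.ne) (fun j h₁ h₂ => (hov j h₁ h₂).2) hv
    fun ℓ hℓ => ofReal_sqDev_cylinder_le_diam hQ (hsub ℓ hℓ) (hI ℓ hℓ).2.2
      (hI ℓ hℓ).2.1 (hD ℓ hℓ).2.1 hv hg (hPoin ℓ hℓ)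

/-- Generalized parabolic Poincaré inequality (Lemma 4.4): for an area
`q = ⋃_{ℓ=0}^L I_ℓ × D_ℓ` covered by time-space cylinders satisfying the
overlap condition (4.6) with constant `κ`, and with the spatial Poincaré
inequality with constant `C_x diam(D_ℓ)` on each cylinder, every
`v ∈ L²(q)` satisfies, with `h_t`, `h_x` the temporal resp. spatial diameters
of `q`, `‖v − ⟨v⟩_q‖²_{L²(q)} ≤ C ( h_x² ‖g‖²_{L²(q)} + h_t |v|²_{H^{1/2}L²(q)} )`,
where `C` depends only on `L`, `κ`, `C_x`. -/
theorem stmt_6 (L : ℕ) (κ Cx : ℝ) (hκ : 1 ≤ κ) (hCx : 0 < Cx) :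
    ∃ C : ℝ, 0 < C ∧
      ∀ (d : ℕ) (I : ℕ → Set ℝ) (D : ℕ → Set (Fin d → ℝ)),
        (∀ ℓ ≤ L, Bornology.IsBounded (I ℓ) ∧ (I ℓ).OrdConnected ∧
          MeasurableSet (I ℓ)) →
        (∀ ℓ ≤ L, Bornology.IsBounded (D ℓ) ∧ MeasurableSet (D ℓ) ∧
          0 < volume (D ℓ)) →
        (∀ j, 1 ≤ j → j ≤ L →
          0 < volume ((I j ×ˢ D j) ∩ ⋃ ℓ ∈ Finset.range j, I ℓ ×ˢ D ℓ) ∧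
          volume (I j ×ˢ D j)
            ≤ ENNReal.ofReal κ *
                volume ((I j ×ˢ D j) ∩ ⋃ ℓ ∈ Finset.range j, I ℓ ×ˢ D ℓ)) →
        ∀ v g : ℝ → (Fin d → ℝ) → ℝ,
          MemLp (fun p : ℝ × (Fin d → ℝ) => v p.1 p.2) 2
            (volume.restrict (⋃ ℓ ∈ Finset.range (L + 1), I ℓ ×ˢ D ℓ)) →
          MemLp (fun p : ℝ × (Fin d → ℝ) => g p.1 p.2) 2
            (volume.restrict (⋃ ℓ ∈ Finset.range (L + 1), I ℓ ×ˢ D ℓ)) →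
          (∀ ℓ ≤ L, ∀ᵐ t ∂(volume.restrict (I ℓ)),
            (∫ x in D ℓ, (v t x - (volume (D ℓ)).toReal⁻¹ * ∫ y in D ℓ, v t y) ^ 2)
              ≤ (Cx * Metric.diam (D ℓ)) ^ 2 * ∫ x in D ℓ, g t x ^ 2) →
          (∫⁻ p in ⋃ ℓ ∈ Finset.range (L + 1), I ℓ ×ˢ D ℓ,
              ENNReal.ofReal
                ((v p.1 p.2 - parMean (⋃ ℓ ∈ Finset.range (L + 1), I ℓ ×ˢ D ℓ) v) ^ 2))
            ≤ ENNReal.ofReal C *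
                (ENNReal.ofReal
                    (Metric.diam (Prod.snd '' ⋃ ℓ ∈ Finset.range (L + 1), I ℓ ×ˢ D ℓ) ^ 2) *
                    (∫⁻ p in ⋃ ℓ ∈ Finset.range (L + 1), I ℓ ×ˢ D ℓ,
                      ENNReal.ofReal (g p.1 p.2 ^ 2))
                  + ENNReal.ofReal
                      (Metric.diam (Prod.fst '' ⋃ ℓ ∈ Finset.range (L + 1), I ℓ ×ˢ D ℓ)) *
                      parSemi (⋃ ℓ ∈ Finset.range (L + 1), I ℓ ×ˢ D ℓ) v) :=
  stmt_6_general L κ Cx hκ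
end

section
/- Let (X, μ) be a measure space and let ω ⊆ q be measurable sets with 0 < μ(ω) and μ(q) < ∞, μ(q) > 0. Then every v ∈ L²(q) satisfies ‖v‖²_{L²(q)} ≤ (1 + 2 μ(q)/μ(ω)) ‖v − ⟨v⟩_q‖²_{L²(q)} + 2 (μ(q)/μ(ω)) ‖v‖²_{L²(ω)}. -/
open MeasureTheory Set

/-!
Subtracting the mean is an orthogonal projection in `L²(q)`, so
`‖v‖²_{L²(q)} = ‖v - m‖²_{L²(q)} + m² μ(q)` with `m = ⟨v⟩_q`. The constant part is then
estimated on `ω`: pointwise `m² ≤ 2v² + 2(v - m)²`, and integrating over `ω ⊆ q` gives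
`m² μ(ω) ≤ 2‖v‖²_{L²(ω)} + 2‖v - m‖²_{L²(q)}`; multiplying by `μ(q)/μ(ω)` concludes.
-/

namespace MeasureTheory

variable {X : Type*} [MeasurableSpace X] {μ : Measure X}

theorem setMean_mul_toReal {A : Set X} (hA : μ A ≠ ⊤) (v : X → ℝ) :
    setMean μ A v * (μ A).toReal = ∫ x in A, v x ∂μ := by
  by_cases h0 : μ A = 0
  · simp [Measure.restrict_eq_zero.mpr h0, h0]
  · have : (μ A).toReal ≠ 0 := ENNReal.toReal_ne_zero.mpr ⟨h0, hA⟩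
    rw [setMean]
    field_simp

theorem setIntegral_sub_setMean_eq_zero {A : Set X} (hA : μ A ≠ ⊤) {v : X → ℝ}
    (hv : IntegrableOn v A μ) : ∫ x in A, (v x - setMean μ A v) ∂μ = 0 := by
  have : IsFiniteMeasure (μ.restrict A) := isFiniteMeasure_restrict.mpr hA
  rw [integral_sub hv (integrable_const _), setIntegral_const, smul_eq_mul, Measure.real,
    ← setMean_mul_toReal hA]
  ring

theorem setIntegral_sq_eq_setIntegral_sq_sub_setMean_add {A : Set X} (hA : μ A < ⊤)
    {v : X → ℝ} (hv : MemLp v 2 (μ.restrict A)) :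
    ∫ x in A, v x ^ 2 ∂μ
      = ∫ x in A, (v x - setMean μ A v) ^ 2 ∂μ + setMean μ A v ^ 2 * (μ A).toReal := by
  have : IsFiniteMeasure (μ.restrict A) := isFiniteMeasure_restrict.mpr hA.ne
  set m := setMean μ A v
  have hvm : Integrable (fun x => v x - m) (μ.restrict A) :=
    (hv.integrable one_le_two).sub (integrable_const m)
  have hvm2 : Integrable (fun x => (v x - m) ^ 2) (μ.restrict A) :=
    (hv.sub (memLp_const m)).integrable_sq
  have hlin : Integrable (fun x => 2 * m * (v x - m) + m ^ 2) (μ.restrict A) :=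
    (hvm.const_mul _).add (integrable_const _)
  calc ∫ x in A, v x ^ 2 ∂μ
      = ∫ x in A, ((v x - m) ^ 2 + (2 * m * (v x - m) + m ^ 2)) ∂μ := by
        congr 1; ext x; ring
    _ = ∫ x in A, (v x - m) ^ 2 ∂μ + m ^ 2 * (μ A).toReal := by
        rw [integral_add hvm2 hlin,
          integral_add (hvm.const_mul _) (integrable_const _), integral_const_mul,
          setIntegral_sub_setMean_eq_zero hA.ne (hv.integrable one_le_two), setIntegral_const,
          smul_eq_mul, Measure.real]
        ring

theorem sq_mul_toReal_le_setIntegral {ω q : Set X} (hsub : ω ⊆ q) (hq : μ q < ⊤)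
    {v : X → ℝ} (hv : MemLp v 2 (μ.restrict q)) (c : ℝ) :
    c ^ 2 * (μ ω).toReal ≤ 2 * ∫ x in ω, v x ^ 2 ∂μ + 2 * ∫ x in q, (v x - c) ^ 2 ∂μ := by
  have : IsFiniteMeasure (μ.restrict q) := isFiniteMeasure_restrict.mpr hq.ne
  have hle : μ.restrict ω ≤ μ.restrict q := Measure.restrict_mono hsub le_rfl
  have hv2 : Integrable (fun x => v x ^ 2) (μ.restrict ω) :=
    hv.integrable_sq.mono_measure hle
  have hvc2 : Integrable (fun x => (v x - c) ^ 2) (μ.restrict q) :=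
    (hv.sub (memLp_const c)).integrable_sq
  have hω : c ^ 2 * (μ ω).toReal ≤ ∫ x in ω, (2 * v x ^ 2 + 2 * (v x - c) ^ 2) ∂μ := by
    have : IsFiniteMeasure (μ.restrict ω) := isFiniteMeasure_restrict.mpr
      ((measure_mono hsub).trans_lt hq).ne
    have hconst : c ^ 2 * (μ ω).toReal = ∫ _ in ω, c ^ 2 ∂μ := by
      rw [setIntegral_const, smul_eq_mul, Measure.real, mul_comm]
    rw [hconst]
    refine integral_mono (integrable_const _)
      ((hv2.const_mul 2).add ((hvc2.mono_measure hle).const_mul 2)) fun x => ?_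
    nlinarith [sq_nonneg (v x + (v x - c))]
  have hmono : ∫ x in ω, (v x - c) ^ 2 ∂μ ≤ ∫ x in q, (v x - c) ^ 2 ∂μ :=
    setIntegral_mono_set hvc2 (Filter.Eventually.of_forall fun x => sq_nonneg _)
      hsub.eventuallyLE
  rw [integral_add (hv2.const_mul 2) ((hvc2.mono_measure hle).const_mul 2),
    integral_const_mul, integral_const_mul] at hω
  linarith

end MeasureTheory

theorem stmt_7_general {X : Type*} [MeasurableSpace X] (μ : Measure X)
    (ω q : Set X) (hsub : ω ⊆ q)
    (hω0 : 0 < μ ω) (hqfin : μ q < ⊤)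
    (v : X → ℝ) (hv : MemLp v 2 (μ.restrict q)) :
    (∫ x in q, v x ^ 2 ∂μ)
      ≤ (1 + 2 * (μ q).toReal / (μ ω).toReal) *
            (∫ x in q, (v x - setMean μ q v) ^ 2 ∂μ)
        + 2 * ((μ q).toReal / (μ ω).toReal) * ∫ x in ω, v x ^ 2 ∂μ := by
  set m := setMean μ q v
  have hW : 0 < (μ ω).toReal :=
    ENNReal.toReal_pos hω0.ne' ((measure_mono hsub).trans_lt hqfin).ne
  have hmean := sq_mul_toReal_le_setIntegral hsub hqfin hv m
  calc ∫ x in q, v x ^ 2 ∂μ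
      = ∫ x in q, (v x - m) ^ 2 ∂μ + (μ q).toReal / (μ ω).toReal * (m ^ 2 * (μ ω).toReal) := by
        rw [setIntegral_sq_eq_setIntegral_sq_sub_setMean_add hqfin hv]
        field_simp
        ring
    _ ≤ ∫ x in q, (v x - m) ^ 2 ∂μ + (μ q).toReal / (μ ω).toReal *
          (2 * ∫ x in ω, v x ^ 2 ∂μ + 2 * ∫ x in q, (v x - m) ^ 2 ∂μ) := by
        gcongr
    _ = _ := by ring

/-- Key estimate of Remark 4.5 ('Boundary'): the full `L²` norm over a region
`q` is controlled by the mean oscillation over `q` together with the `L²` norm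
over a subregion `ω ⊆ q` of positive measure:
`‖v‖²_{L²(q)} ≤ (1 + 2 μ(q)/μ(ω)) ‖v − ⟨v⟩_q‖²_{L²(q)}
  + 2 (μ(q)/μ(ω)) ‖v‖²_{L²(ω)}`. -/
theorem stmt_7 {X : Type*} [MeasurableSpace X] (μ : Measure X)
    (ω q : Set X) (hωMeas : MeasurableSet ω) (hqMeas : MeasurableSet q)
    (hsub : ω ⊆ q)
    (hω0 : 0 < μ ω) (hq0 : 0 < μ q) (hqfin : μ q < ⊤)
    (v : X → ℝ) (hv : MemLp v 2 (μ.restrict q)) :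
    (∫ x in q, v x ^ 2 ∂μ)
      ≤ (1 + 2 * (μ q).toReal / (μ ω).toReal) *
            (∫ x in q, (v x - setMean μ q v) ^ 2 ∂μ)
        + 2 * ((μ q).toReal / (μ ω).toReal) * ∫ x in ω, v x ^ 2 ∂μ :=
  stmt_7_general μ ω q hsub hω0 hqfin v hv
end

section
/- Fix k ∈ ℕ, n ∈ ℕ, and κ ≥ 1. There exists a constant C > 0, depending only on k, n, and κ, with the following property. For every h > 0 and every partition of a bounded interval I ⊂ ℝ into consecutive subintervals I₁, …, I_n whose lengths all lie in [h, κh], every continuous function v : I → ℝ whose restriction to each I_j is a polynomial of degree at most k satisfies ∫_I ∫_I |v(t) − v(s)|² |t−s|^{-2} ds dt ≤ C h^{-1} ∫_I |v(t)|² dt. -/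
/-!
On one subinterval `[a, b]`, the squared Lipschitz constant of a polynomial of degree at most `k`
is at most `C (b - a)⁻³ ∫ₐᵇ p²`: on `[0, 1]` the squared sup norm of the coefficient vector is
controlled by `∫₀¹ p²` (a positive definite quadratic form attains a positive minimum on the
compact unit sphere), and affine rescaling gives the general interval. Gluing the subintervals,
`v` is Lipschitz on `I` with squared constant `C h⁻³ ‖v‖²_{L²(I)}`; this bounds the Slobodeckij
integrand pointwise, and `|I|² ≤ (nκh)²` turns it into `C (nκ)² h⁻¹ ‖v‖²_{L²(I)}`.
-/

open MeasureTheory Set Polynomial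

theorem exists_pos_mul_norm_sq_le {E : Type*} [NormedAddCommGroup E] [NormedSpace ℝ E]
    [FiniteDimensional ℝ E] [Nontrivial E] {F : E → ℝ} (hF : Continuous F)
    (hF_smul : ∀ (c : ℝ) (a : E), F (c • a) = c ^ 2 * F a) (hF_pos : ∀ a ≠ 0, 0 < F a) :
    ∃ ε > 0, ∀ a, ε * ‖a‖ ^ 2 ≤ F a := by
  obtain ⟨a₀, ha₀, hmin⟩ := (isCompact_sphere (0 : E) 1).exists_isMinOn
    (NormedSpace.sphere_nonempty.mpr zero_le_one) hF.continuousOn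
  refine ⟨F a₀, hF_pos a₀ (ne_zero_of_mem_unit_sphere ⟨a₀, ha₀⟩), fun a => ?_⟩
  rcases eq_or_ne a 0 with rfl | ha
  · simpa using (hF_smul 0 0).ge
  have hunit : ‖a‖⁻¹ • a ∈ Metric.sphere (0 : E) 1 := by
    simp [norm_smul, inv_mul_cancel₀ (norm_ne_zero_iff.mpr ha)]
  calc F a₀ * ‖a‖ ^ 2 ≤ F (‖a‖⁻¹ • a) * ‖a‖ ^ 2 := by gcongr; exact hmin hunit
    _ = F a := by
      rw [hF_smul, inv_pow, mul_comm, ← mul_assoc, mul_inv_cancel₀ (by positivity), one_mul]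

theorem Polynomial.integral_eval_sq_pos {p : ℝ[X]} (hp : p ≠ 0) {a b : ℝ} (hab : a < b) :
    0 < ∫ x in a..b, p.eval x ^ 2 := by
  obtain ⟨c, hc, hroot⟩ := (Icc_infinite hab).exists_notMem_finset p.roots.toFinset
  refine intervalIntegral.integral_pos hab (by fun_prop) (fun _ _ => sq_nonneg _) ⟨c, hc, ?_⟩
  have : p.eval c ≠ 0 := fun h => hroot (by simpa [hp] using h)
  positivity

theorem Polynomial.exists_pos_mul_norm_sq_le_integral (n : ℕ) [NeZero n] :
    ∃ ε > 0, ∀ p (hp : p ∈ degreeLT ℝ n),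
      ε * ‖degreeLTEquiv ℝ n ⟨p, hp⟩‖ ^ 2 ≤ ∫ x in (0 : ℝ)..1, p.eval x ^ 2 := by
  have hF_smul (c : ℝ) (a : Fin n → ℝ) :
      ∫ x in (0 : ℝ)..1, (∑ i, (c • a) i * x ^ (i : ℕ)) ^ 2
        = c ^ 2 * ∫ x in (0 : ℝ)..1, (∑ i, a i * x ^ (i : ℕ)) ^ 2 := by
    simp_rw [← intervalIntegral.integral_const_mul, Pi.smul_apply, smul_eq_mul, mul_assoc,
      ← Finset.mul_sum, mul_pow]
  have hF_pos (a : Fin n → ℝ) (ha : a ≠ 0) :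
      0 < ∫ x in (0 : ℝ)..1, (∑ i, a i * x ^ (i : ℕ)) ^ 2 := by
    obtain ⟨⟨q, hq⟩, rfl⟩ := (degreeLTEquiv ℝ n).surjective a
    simp_rw [← eval_eq_sum_degreeLTEquiv hq]
    refine integral_eval_sq_pos (fun h => ha ?_) zero_lt_one
    simp [h]
  obtain ⟨ε, hε, hbound⟩ := exists_pos_mul_norm_sq_le (by fun_prop) hF_smul hF_pos
  refine ⟨ε, hε, fun p hp => ?_⟩
  simpa only [← eval_eq_sum_degreeLTEquiv hp] using hbound (degreeLTEquiv ℝ n ⟨p, hp⟩)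

theorem Polynomial.abs_eval_sub_eval_le {n : ℕ} {p : ℝ[X]} (hp : p ∈ degreeLT ℝ n) {x y : ℝ}
    (hx : x ∈ Icc (0 : ℝ) 1) (hy : y ∈ Icc (0 : ℝ) 1) :
    |p.eval x - p.eval y| ≤ n * (n * ‖degreeLTEquiv ℝ n ⟨p, hp⟩‖ * |x - y|) := by
  set a := degreeLTEquiv ℝ n ⟨p, hp⟩
  have hpow (i : Fin n) : |x ^ (i : ℕ) - y ^ (i : ℕ)| ≤ n * |x - y| := by
    have hmax : max |x| |y| ≤ 1 := max_le (abs_le.mpr ⟨by linarith [hx.1], hx.2⟩)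
      (abs_le.mpr ⟨by linarith [hy.1], hy.2⟩)
    calc |x ^ (i : ℕ) - y ^ (i : ℕ)| ≤ |x - y| * i * max |x| |y| ^ ((i : ℕ) - 1) :=
          abs_pow_sub_pow_le _ _ _
      _ ≤ |x - y| * n * 1 := by
          gcongr
          · exact i.isLt.le
          · exact pow_le_one₀ (by positivity) hmax
      _ = n * |x - y| := by ring
  rw [eval_eq_sum_degreeLTEquiv hp, eval_eq_sum_degreeLTEquiv hp, ← Finset.sum_sub_distrib]
  calc |∑ i, (a i * x ^ (i : ℕ) - a i * y ^ (i : ℕ))|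
      ≤ ∑ i, |a i| * |x ^ (i : ℕ) - y ^ (i : ℕ)| := by
        simp_rw [← mul_sub, ← abs_mul]; exact Finset.abs_sum_le_sum_abs _ _
    _ ≤ ∑ _i : Fin n, ‖a‖ * (n * |x - y|) := by
        gcongr with i
        exacts [norm_le_pi_norm a i, hpow i]
    _ = n * (n * ‖a‖ * |x - y|) := by
        rw [Finset.sum_const, Finset.card_univ, Fintype.card_fin, nsmul_eq_mul]; ring

theorem Polynomial.exists_sq_eval_sub_le_integral_unitInterval (k : ℕ) :
    ∃ C, 0 ≤ C ∧ ∀ p : ℝ[X], p.natDegree ≤ k → ∀ x ∈ Icc (0 : ℝ) 1, ∀ y ∈ Icc (0 : ℝ) 1,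
      (p.eval x - p.eval y) ^ 2 ≤ C * (x - y) ^ 2 * ∫ u in (0 : ℝ)..1, p.eval u ^ 2 := by
  obtain ⟨ε, hε, hcoeff⟩ := exists_pos_mul_norm_sq_le_integral (k + 1)
  refine ⟨(k + 1) ^ 4 / ε, by positivity, fun p hpk x hx y hy => ?_⟩
  have hp : p ∈ degreeLT ℝ (k + 1) := by
    rw [degreeLT_succ_eq_degreeLE, mem_degreeLE]
    exact natDegree_le_iff_degree_le.mp hpk
  set a := degreeLTEquiv ℝ (k + 1) ⟨p, hp⟩
  have ha : ‖a‖ ^ 2 ≤ (∫ u in (0 : ℝ)..1, p.eval u ^ 2) / ε :=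
    (le_div_iff₀' hε).mpr (hcoeff p hp)
  calc (p.eval x - p.eval y) ^ 2 = |p.eval x - p.eval y| ^ 2 := (sq_abs _).symm
    _ ≤ ((k + 1) * ((k + 1) * ‖a‖ * |x - y|)) ^ 2 := by
        gcongr; exact_mod_cast abs_eval_sub_eval_le hp hx hy
    _ = (k + 1) ^ 4 * (x - y) ^ 2 * ‖a‖ ^ 2 := by rw [← sq_abs (x - y)]; ring
    _ ≤ (k + 1) ^ 4 * (x - y) ^ 2 * ((∫ u in (0 : ℝ)..1, p.eval u ^ 2) / ε) := by gcongr
    _ = (k + 1) ^ 4 / ε * (x - y) ^ 2 * ∫ u in (0 : ℝ)..1, p.eval u ^ 2 := by ring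

theorem Polynomial.exists_sq_eval_sub_le_integral (k : ℕ) :
    ∃ C, 0 ≤ C ∧ ∀ p : ℝ[X], p.natDegree ≤ k → ∀ a b : ℝ, a < b →
      ∀ x ∈ Icc a b, ∀ y ∈ Icc a b,
        (p.eval x - p.eval y) ^ 2 ≤ C / (b - a) ^ 3 * (x - y) ^ 2 * ∫ u in a..b, p.eval u ^ 2 := by
  obtain ⟨C, hC, hunit⟩ := exists_sq_eval_sub_le_integral_unitInterval k
  refine ⟨C, hC, fun p hpk a b hab x hx y hy => ?_⟩
  have hba : b - a ≠ 0 := (sub_pos.mpr hab).ne'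
  set q := p.comp (Polynomial.C (b - a) * X + Polynomial.C a)
  have hq_eval (u : ℝ) : q.eval u = p.eval ((b - a) * u + a) := by simp [q]
  have hq_deg : q.natDegree ≤ k :=
    natDegree_comp_le.trans ((Nat.mul_le_mul hpk natDegree_linear_le).trans_eq (mul_one k))
  have hq_integral : ∫ u in (0 : ℝ)..1, q.eval u ^ 2 = (b - a)⁻¹ * ∫ u in a..b, p.eval u ^ 2 := by
    simp_rw [hq_eval]
    simpa using intervalIntegral.integral_comp_mul_add (a := 0) (b := 1)
      (fun z => p.eval z ^ 2) hba a
  have hrescale {z : ℝ} (hz : z ∈ Icc a b) : (z - a) / (b - a) ∈ Icc (0 : ℝ) 1 ∧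
      q.eval ((z - a) / (b - a)) = p.eval z := by
    refine ⟨⟨div_nonneg (by linarith [hz.1]) (by linarith), (div_le_one (by linarith)).mpr
      (by linarith [hz.2])⟩, by rw [hq_eval]; field_simp; ring_nf⟩
  have key := hunit q hq_deg _ (hrescale hx).1 _ (hrescale hy).1
  rw [(hrescale hx).2, (hrescale hy).2, hq_integral] at key
  calc (p.eval x - p.eval y) ^ 2 ≤ C * ((x - a) / (b - a) - (y - a) / (b - a)) ^ 2 *
        ((b - a)⁻¹ * ∫ u in a..b, p.eval u ^ 2) := key
    _ = C / (b - a) ^ 3 * (x - y) ^ 2 * ∫ u in a..b, p.eval u ^ 2 := by field_simp; ring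

section LipschitzGluing

variable {α : Type*} [PseudoMetricSpace α] {f : ℝ → α} {B : ℝ}

theorem dist_le_mul_of_Icc_union {a b c : ℝ}
    (hab : ∀ x ∈ Icc a b, ∀ y ∈ Icc a b, dist (f x) (f y) ≤ B * dist x y)
    (hbc : ∀ x ∈ Icc b c, ∀ y ∈ Icc b c, dist (f x) (f y) ≤ B * dist x y) :
    ∀ x ∈ Icc a c, ∀ y ∈ Icc a c, dist (f x) (f y) ≤ B * dist x y := by
  intro x hx y hy
  wlog hxy : x ≤ y generalizing x y
  · rw [dist_comm (f x), dist_comm x]; exact this y hy x hx (le_of_not_ge hxy)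
  by_cases hyb : y ≤ b
  · exact hab x ⟨hx.1, hxy.trans hyb⟩ y ⟨hy.1, hyb⟩
  by_cases hbx : b ≤ x
  · exact hbc x ⟨hbx, hx.2⟩ y ⟨hxy.trans' hbx, hy.2⟩
  rw [not_le] at hyb hbx
  calc dist (f x) (f y) ≤ dist (f x) (f b) + dist (f b) (f y) := dist_triangle _ _ _
    _ ≤ B * dist x b + B * dist b y :=
        add_le_add (hab x ⟨hx.1, hbx.le⟩ b ⟨hx.1.trans hbx.le, le_rfl⟩)
          (hbc b ⟨le_rfl, hyb.le.trans hy.2⟩ y ⟨hyb.le, hy.2⟩)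
    _ = B * dist x y := by
        simp only [Real.dist_eq, abs_of_neg (sub_neg.mpr hbx), abs_of_neg (sub_neg.mpr hyb),
          abs_of_nonpos (sub_nonpos.mpr hxy)]
        ring

theorem dist_le_mul_of_partition {t : ℕ → ℝ} {n : ℕ}
    (hf : ∀ j < n, ∀ x ∈ Icc (t j) (t (j + 1)), ∀ y ∈ Icc (t j) (t (j + 1)),
      dist (f x) (f y) ≤ B * dist x y) :
    ∀ x ∈ Icc (t 0) (t n), ∀ y ∈ Icc (t 0) (t n), dist (f x) (f y) ≤ B * dist x y := by
  induction n with
  | zero =>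
    intro x hx y hy
    rw [le_antisymm hx.2 hx.1, le_antisymm hy.2 hy.1, dist_self, dist_self, mul_zero]
  | succ n ih =>
    exact dist_le_mul_of_Icc_union (ih fun j hj => hf j (by omega)) (hf n n.lt_succ_self)

end LipschitzGluing

theorem sub_mem_Icc_of_forall_succ_sub_mem_Icc {t : ℕ → ℝ} {n : ℕ} {H : ℝ}
    (ht : ∀ j < n, t (j + 1) - t j ∈ Icc 0 H) : t n - t 0 ∈ Icc 0 (n * H) := by
  rw [← Finset.sum_range_sub]
  refine ⟨Finset.sum_nonneg fun j hj => (ht j (Finset.mem_range.mp hj)).1, ?_⟩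
  exact (Finset.sum_le_sum fun j hj => (ht j (Finset.mem_range.mp hj)).2).trans_eq (by simp)

theorem setLIntegral_setLIntegral_le {α β : Type*} [MeasurableSpace α] [MeasurableSpace β]
    {μ : Measure α} {ν : Measure β} {s : Set α} {t : Set β} {f : α → β → ENNReal} {c : ENNReal}
    (hf : ∀ x ∈ s, ∀ y ∈ t, f x y ≤ c) :
    ∫⁻ x in s, ∫⁻ y in t, f x y ∂ν ∂μ ≤ c * ν t * μ s := calc
  _ ≤ ∫⁻ _ in s, c * ν t ∂μ := setLIntegral_mono measurable_const fun x hx =>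
        (setLIntegral_mono measurable_const (hf x hx)).trans_eq (setLIntegral_const t c)
  _ = c * ν t * μ s := setLIntegral_const s _

theorem exists_sq_sub_le_of_piecewise_polynomial (k : ℕ) :
    ∃ C, 0 ≤ C ∧ ∀ (n : ℕ) (h : ℝ), 0 < h → ∀ t : ℕ → ℝ, (∀ j < n, h ≤ t (j + 1) - t j) →
      ∀ v : ℝ → ℝ, IntegrableOn (fun x => v x ^ 2) (Icc (t 0) (t n)) →
      (∀ j < n, ∃ p : ℝ[X], p.natDegree ≤ k ∧ ∀ x ∈ Icc (t j) (t (j + 1)), v x = p.eval x) →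
      ∀ x ∈ Icc (t 0) (t n), ∀ y ∈ Icc (t 0) (t n),
        (v x - v y) ^ 2 ≤ C / h ^ 3 * (∫ u in Icc (t 0) (t n), v u ^ 2) * (x - y) ^ 2 := by
  obtain ⟨C, hC, hpoly⟩ := exists_sq_eval_sub_le_integral k
  refine ⟨C, hC, fun n h hh t ht v hv hvp => ?_⟩
  set S := ∫ u in Icc (t 0) (t n), v u ^ 2
  have hS : 0 ≤ S := setIntegral_nonneg measurableSet_Icc fun _ _ => sq_nonneg _
  set K := C / h ^ 3 * S
  have hK : 0 ≤ K := by positivity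
  have hmono : MonotoneOn t (Iic n) := monotoneOn_of_le_succ ordConnected_Iic
    fun j _ _ hj => by simp only [Order.succ_eq_add_one] at hj ⊢; linarith [ht j hj]
  have hpiece : ∀ j < n, ∀ x ∈ Icc (t j) (t (j + 1)), ∀ y ∈ Icc (t j) (t (j + 1)),
      dist (v x) (v y) ≤ √K * dist x y := by
    intro j hj x hx y hy
    obtain ⟨p, hpk, hpv⟩ := hvp j hj
    have hlen : h ≤ t (j + 1) - t j := ht j hj
    have hsub : Icc (t j) (t (j + 1)) ⊆ Icc (t 0) (t n) :=
      Icc_subset_Icc (hmono (by simp) (by simp; omega) (by omega))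
        (hmono (by simp; omega) (by simp) hj)
    have hpS : ∫ u in t j..t (j + 1), p.eval u ^ 2 ≤ S := by
      rw [intervalIntegral.integral_of_le (by linarith), ← integral_Icc_eq_integral_Ioc,
        ← setIntegral_congr_fun measurableSet_Icc fun u hu => by rw [← hpv u hu]]
      exact setIntegral_mono_set hv (ae_of_all _ fun _ => sq_nonneg _) hsub.eventuallyLE
    have hsq := hpoly p hpk _ _ (by linarith) x hx y hy
    rw [← hpv x hx, ← hpv y hy] at hsq
    rw [Real.dist_eq, Real.dist_eq, ← Real.sqrt_sq_eq_abs (x - y), ← Real.sqrt_mul hK]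
    refine Real.abs_le_sqrt (hsq.trans ?_)
    calc C / (t (j + 1) - t j) ^ 3 * (x - y) ^ 2 * ∫ u in t j..t (j + 1), p.eval u ^ 2
        ≤ C / h ^ 3 * (x - y) ^ 2 * S := by
          gcongr
          exact intervalIntegral.integral_nonneg (by linarith) fun _ _ => sq_nonneg _
      _ = K * (x - y) ^ 2 := by ring
  intro x hx y hy
  have hdist := dist_le_mul_of_partition hpiece x hx y hy
  rw [Real.dist_eq, Real.dist_eq] at hdist
  calc (v x - v y) ^ 2 = |v x - v y| ^ 2 := (sq_abs _).symm
    _ ≤ (√K * |x - y|) ^ 2 := by gcongr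
    _ = K * (x - y) ^ 2 := by rw [mul_pow, Real.sq_sqrt hK, sq_abs]

theorem stmt_8_general (k n : ℕ) (κ : ℝ) :
    ∃ C : ℝ, 0 < C ∧
      ∀ h : ℝ, 0 < h →
        ∀ t : ℕ → ℝ,
          (∀ j < n, h ≤ t (j + 1) - t j ∧ t (j + 1) - t j ≤ κ * h) →
          ∀ v : ℝ → ℝ, ContinuousOn v (Icc (t 0) (t n)) →
            (∀ j < n, ∃ p : Polynomial ℝ, p.natDegree ≤ k ∧
              ∀ x ∈ Icc (t j) (t (j + 1)), v x = p.eval x) →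
            (∫⁻ x in Icc (t 0) (t n), ∫⁻ s in Icc (t 0) (t n),
                ENNReal.ofReal ((v x - v s) ^ 2 / (x - s) ^ 2))
              ≤ ENNReal.ofReal (C / h) *
                  ∫⁻ x in Icc (t 0) (t n), ENNReal.ofReal (v x ^ 2) := by
  obtain ⟨C, hC, hlip⟩ := exists_sq_sub_le_of_piecewise_polynomial k
  refine ⟨C * (n * κ) ^ 2 + 1, by positivity, fun h hh t ht v hv hvp => ?_⟩
  have hv2 : IntegrableOn (fun x => v x ^ 2) (Icc (t 0) (t n)) :=
    (hv.pow 2).integrableOn_compact isCompact_Icc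
  set S := ∫ x in Icc (t 0) (t n), v x ^ 2
  have hS : 0 ≤ S := setIntegral_nonneg measurableSet_Icc fun _ _ => sq_nonneg _
  obtain ⟨hL₀, hL⟩ : t n - t 0 ∈ Icc 0 (n * (κ * h)) :=
    sub_mem_Icc_of_forall_succ_sub_mem_Icc fun j hj => ⟨hh.le.trans (ht j hj).1, (ht j hj).2⟩
  have hquot : ∀ x ∈ Icc (t 0) (t n), ∀ s ∈ Icc (t 0) (t n),
      ENNReal.ofReal ((v x - v s) ^ 2 / (x - s) ^ 2) ≤ ENNReal.ofReal (C / h ^ 3 * S) :=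
    fun x hx s hs => ENNReal.ofReal_le_ofReal <| div_le_of_le_mul₀ (sq_nonneg _) (by positivity)
      (hlip n h hh t (fun j hj => (ht j hj).1) v hv2 hvp x hx s hs)
  calc _ ≤ ENNReal.ofReal (C / h ^ 3 * S) * volume (Icc (t 0) (t n)) * volume (Icc (t 0) (t n)) :=
        setLIntegral_setLIntegral_le hquot
    _ = ENNReal.ofReal (C / h ^ 3 * S * (t n - t 0) ^ 2) := by
        rw [Real.volume_Icc, ← ENNReal.ofReal_mul (by positivity),
          ← ENNReal.ofReal_mul (by positivity), mul_assoc, ← sq]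
    _ ≤ ENNReal.ofReal ((C * (n * κ) ^ 2 + 1) / h * S) := by
        refine ENNReal.ofReal_le_ofReal ?_
        calc C / h ^ 3 * S * (t n - t 0) ^ 2 ≤ C / h ^ 3 * S * (n * (κ * h)) ^ 2 := by gcongr
          _ = C * (n * κ) ^ 2 / h * S := by field_simp
          _ ≤ (C * (n * κ) ^ 2 + 1) / h * S := by gcongr; linarith
    _ = _ := by
        rw [ENNReal.ofReal_mul (by positivity),
          ofReal_integral_eq_lintegral_ofReal hv2 (ae_of_all _ fun _ => sq_nonneg _)]

/-- One-dimensional inverse estimate underlying Lemma 4.8 ('Inverse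
estimate'): for continuous piecewise polynomials of degree at most `k` on a
quasi-uniform partition `t 0 < t 1 < ⋯ < t n` of a bounded interval (all
subinterval lengths in `[h, κh]`), the `H^{1/2}` Sobolev–Slobodeckij seminorm
squared is bounded by `C h⁻¹` times the squared `L²` norm, with `C` depending
only on `k`, `n`, `κ`. -/
theorem stmt_8 (k n : ℕ) (κ : ℝ) (hκ : 1 ≤ κ) :
    ∃ C : ℝ, 0 < C ∧
      ∀ h : ℝ, 0 < h →
        ∀ t : ℕ → ℝ,
          (∀ j < n, h ≤ t (j + 1) - t j ∧ t (j + 1) - t j ≤ κ * h) →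
          ∀ v : ℝ → ℝ, ContinuousOn v (Icc (t 0) (t n)) →
            (∀ j < n, ∃ p : Polynomial ℝ, p.natDegree ≤ k ∧
              ∀ x ∈ Icc (t j) (t (j + 1)), v x = p.eval x) →
            (∫⁻ x in Icc (t 0) (t n), ∫⁻ s in Icc (t 0) (t n),
                ENNReal.ofReal ((v x - v s) ^ 2 / (x - s) ^ 2))
              ≤ ENNReal.ofReal (C / h) *
                  ∫⁻ x in Icc (t 0) (t n), ENNReal.ofReal (v x ^ 2) :=
  stmt_8_general k n κ
end

section
/- Let U be a finite-dimensional real inner product space, let I be a finite index set, and for each i ∈ I let U_i be a finite-dimensional real inner product space and E_i : U_i → U a linear map, such that the ranges of the maps E_i together span U. Define G : U → U by G u := ∑_{i∈I} E_i E_i^* u, where E_i^* : U → U_i is the adjoint of E_i. Then G is symmetric positive definite (in particular bijective), and for every u ∈ U one has ⟨G^{-1} u, u⟩_U = min { ∑_{i∈I} ‖u_i‖²_{U_i} : u_i ∈ U_i for all i, and ∑_{i∈I} E_i u_i = u }. -/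
open RealInnerProductSpace

/-- Additive subspace-correction theorem (Theorem 6.1, Oswald) in
finite-dimensional form: with `G = ∑ᵢ Eᵢ Eᵢ*`, where the ranges of the `Eᵢ`
span `U`, the operator `G` is symmetric positive definite (hence bijective) and
the quadratic form of its inverse equals the minimum of `∑ᵢ ‖uᵢ‖²` over all
decompositions `u = ∑ᵢ Eᵢ uᵢ`. -/
theorem stmt_9 {U : Type*} [NormedAddCommGroup U] [InnerProductSpace ℝ U]
    [FiniteDimensional ℝ U]
    {ι : Type*} [Fintype ι]
    (Ui : ι → Type*) [∀ i, NormedAddCommGroup (Ui i)]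
    [∀ i, InnerProductSpace ℝ (Ui i)] [∀ i, FiniteDimensional ℝ (Ui i)]
    (E : ∀ i, Ui i →ₗ[ℝ] U)
    (hspan : (⨆ i, LinearMap.range (E i)) = ⊤) :
    letI G : U →ₗ[ℝ] U := ∑ i, (E i) ∘ₗ (LinearMap.adjoint (E i))
    Function.Bijective G ∧
    (∀ u w : U, ⟪G u, w⟫ = ⟪u, G w⟫) ∧
    (∀ u : U, u ≠ 0 → 0 < ⟪G u, u⟫) ∧
    (∀ u w : U, G w = u →
      IsLeast {r : ℝ | ∃ f : ∀ i, Ui i,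
        (∑ i, E i (f i)) = u ∧ r = ∑ i, ‖f i‖ ^ 2} ⟪w, u⟫) := by
  set G : U →ₗ[ℝ] U := ∑ i, (E i) ∘ₗ (LinearMap.adjoint (E i)) with hG
  have hGapp : ∀ u, G u = ∑ i, E i (LinearMap.adjoint (E i) u) := by
    intro u
    simp [hG, LinearMap.sum_apply]
  -- key inner product formula
  have hinner : ∀ u w : U, ⟪G u, w⟫ = ∑ i, ⟪LinearMap.adjoint (E i) u, LinearMap.adjoint (E i) w⟫ := by
    intro u w
    rw [hGapp, sum_inner]
    congr 1; ext i
    rw [LinearMap.adjoint_inner_right]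
  have hsym : ∀ u w : U, ⟪G u, w⟫ = ⟪u, G w⟫ := by
    intro u w
    rw [hinner, real_inner_comm, hinner]
    congr 1; ext i; rw [real_inner_comm]
  have hquad : ∀ u : U, ⟪G u, u⟫ = ∑ i, ‖LinearMap.adjoint (E i) u‖ ^ 2 := by
    intro u
    rw [hinner]
    congr 1; ext i
    rw [real_inner_self_eq_norm_sq]
  have hpos : ∀ u : U, u ≠ 0 → 0 < ⟪G u, u⟫ := by
    intro u hu
    rw [hquad]
    by_contra h
    push_neg at h
    have hz : ∀ i, LinearMap.adjoint (E i) u = 0 := by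
      intro i
      have hle : ∀ j ∈ Finset.univ, (0:ℝ) ≤ ‖LinearMap.adjoint (E j) u‖ ^ 2 := by
        intro j _; positivity
      have := (Finset.sum_eq_zero_iff_of_nonneg hle).mp
        (le_antisymm h (Finset.sum_nonneg hle)) i (Finset.mem_univ i)
      simpa using norm_eq_zero.mp (by nlinarith [norm_nonneg (LinearMap.adjoint (E i) u)])
    -- then u ⟂ everything
    have : u = 0 := by
      have hmem : u ∈ (⨆ i, LinearMap.range (E i)) := hspan ▸ Submodule.mem_top
      have horth : ∀ v : U, v ∈ (⨆ i, LinearMap.range (E i)) → ⟪u, v⟫ = 0 := by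
        intro v hv
        induction hv using Submodule.iSup_induction' with
        | mem i x hx =>
          obtain ⟨y, rfl⟩ := hx
          rw [← LinearMap.adjoint_inner_left, hz, inner_zero_left]
        | zero => simp
        | add x _ y _ hx hy => rw [inner_add_right, hx, hy]; ring
      exact inner_self_eq_zero.mp (horth u hmem)
    exact hu this
  have hinj : Function.Injective G := by
    rw [← LinearMap.ker_eq_bot]
    rw [LinearMap.ker_eq_bot']
    intro u hu
    by_contra h
    have := hpos u h
    rw [hu, inner_zero_left] at this
    exact lt_irrefl 0 this
  refine ⟨⟨hinj, ?_⟩, hsym, hpos, ?_⟩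
  · exact LinearMap.surjective_of_injective hinj
  · intro u w hGw
    constructor
    · refine ⟨fun i => LinearMap.adjoint (E i) w, ?_, ?_⟩
      · rw [← hGapp, hGw]
      · rw [← hquad, real_inner_comm, hGw]
    · rintro r ⟨f, hf, rfl⟩
      have key : ⟪w, u⟫ = ∑ i, ⟪LinearMap.adjoint (E i) w, f i⟫ := by
        rw [← hf, inner_sum]
        congr 1; ext i
        rw [LinearMap.adjoint_inner_left]
      have hq : ⟪w, u⟫ = ∑ i, ‖LinearMap.adjoint (E i) w‖ ^ 2 := by
        rw [← hquad, real_inner_comm, hGw]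
      have hexp : (0:ℝ) ≤ ∑ i, ‖f i - LinearMap.adjoint (E i) w‖ ^ 2 :=
        Finset.sum_nonneg fun i _ => by positivity
      have heq : ∑ i, ‖f i - LinearMap.adjoint (E i) w‖ ^ 2
          = ∑ i, ‖f i‖ ^ 2 - 2 * ∑ i, ⟪LinearMap.adjoint (E i) w, f i⟫
            + ∑ i, ‖LinearMap.adjoint (E i) w‖ ^ 2 := by
        have hterm : ∀ i, ‖f i - LinearMap.adjoint (E i) w‖ ^ 2
            = ‖f i‖ ^ 2 - 2 * ⟪LinearMap.adjoint (E i) w, f i⟫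
              + ‖LinearMap.adjoint (E i) w‖ ^ 2 := fun i => by
          rw [@norm_sub_sq_real, real_inner_comm]
        rw [Finset.sum_congr rfl (fun i _ => hterm i), Finset.sum_add_distrib,
          Finset.sum_sub_distrib, ← Finset.mul_sum]
      linarith
end

section
/- Let H₀ be a real Hilbert space, let V₀ ⊆ V₁ ⊆ V₂ ⊆ ⋯ be an increasing sequence of closed subspaces with orthogonal projections P_ℓ : H₀ → V_ℓ, set P_{-1} := 0, and let θ > 1. Let u ∈ H₀ lie in the closure of ⋃_{ℓ≥0} V_ℓ. Then, as an inequality in [0,∞], θ^{-1} ∑_{ℓ=0}^{∞} θ^{ℓ} ‖(P_ℓ − P_{ℓ-1}) u‖² ≤ ∑_{ℓ=0}^{∞} θ^{ℓ} ‖u − P_ℓ u‖² + ‖P₀ u‖² ≤ (1 + (θ−1)^{-1}) ∑_{ℓ=0}^{∞} θ^{ℓ} ‖(P_ℓ − P_{ℓ-1}) u‖². -/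
/-!
By Pythagoras, `‖u - P ℓ u‖² = ‖u - P (ℓ+1) u‖² + ‖(P (ℓ+1) - P ℓ) u‖²`, and `P ℓ u → u` because
`u` is approximated by the nested spaces. Telescoping, the error `‖u - P ℓ u‖²` is the tail sum
`∑_{k > ℓ} ‖(P k - P (k-1)) u‖²`. Keeping only the first term of each tail gives the lower bound;
for the upper bound, exchange the two summations in `[0, ∞]`: the terms at distance `j + 1` beyond
`ℓ` carry the weight `θ^ℓ = θ^{-(j+1)} θ^k`, and `∑_j θ^{-(j+1)} = (θ - 1)⁻¹`.
-/

open RealInnerProductSpace Filter Topology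
open scoped ENNReal

namespace ENNReal

theorem tsum_inv_pow_succ {T : ℝ≥0∞} (h0 : T ≠ 0) (htop : T ≠ ∞) :
    ∑' j : ℕ, T⁻¹ ^ (j + 1) = (T - 1)⁻¹ := by
  have hsub : T * (1 - T⁻¹) = T - 1 := by
    rw [ENNReal.mul_sub fun _ _ => htop, mul_one, ENNReal.mul_inv_cancel h0 htop]
  rw [tsum_geometric_add_one, ← hsub, ENNReal.mul_inv (.inl h0) (.inl htop)]

theorem inv_mul_tsum_pow_mul_le {T : ℝ≥0∞} (hT : 1 ≤ T) {a b : ℕ → ℝ≥0∞}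
    (hab : ∀ ℓ, b (ℓ + 1) ≤ a ℓ) :
    T⁻¹ * ∑' ℓ, T ^ ℓ * b ℓ ≤ ∑' ℓ, T ^ ℓ * a ℓ + b 0 := by
  have hshift : ∑' ℓ, T ^ (ℓ + 1) * b (ℓ + 1) ≤ T * ∑' ℓ, T ^ ℓ * a ℓ := by
    rw [← ENNReal.tsum_mul_left]
    refine ENNReal.tsum_le_tsum fun ℓ => ?_
    rw [pow_succ', mul_assoc]
    gcongr
    exact hab ℓ
  calc T⁻¹ * ∑' ℓ, T ^ ℓ * b ℓ
      = T⁻¹ * (b 0 + ∑' ℓ, T ^ (ℓ + 1) * b (ℓ + 1)) := by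
        rw [tsum_eq_zero_add' ENNReal.summable, pow_zero, one_mul]
    _ ≤ T⁻¹ * (b 0 + T * ∑' ℓ, T ^ ℓ * a ℓ) := by gcongr
    _ = T⁻¹ * b 0 + T⁻¹ * T * ∑' ℓ, T ^ ℓ * a ℓ := by rw [mul_add, mul_assoc]
    _ ≤ 1 * b 0 + 1 * ∑' ℓ, T ^ ℓ * a ℓ := by
        gcongr
        · exact ENNReal.inv_le_one.2 hT
        · exact ENNReal.inv_mul_le_one T
    _ = ∑' ℓ, T ^ ℓ * a ℓ + b 0 := by rw [one_mul, one_mul, add_comm]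

theorem tsum_pow_mul_tsum_tail_le {T : ℝ≥0∞} (h0 : T ≠ 0) (htop : T ≠ ∞) (b : ℕ → ℝ≥0∞) :
    ∑' ℓ, T ^ ℓ * ∑' j, b (ℓ + j + 1) ≤ (T - 1)⁻¹ * ∑' k, T ^ k * b k := by
  have hweight : ∀ ℓ j, T ^ ℓ = T⁻¹ ^ (j + 1) * T ^ (ℓ + j + 1) := fun ℓ j => by
    rw [← ENNReal.inv_pow, add_assoc, add_comm ℓ, pow_add T (j + 1) ℓ,
      ENNReal.inv_mul_cancel_left (pow_ne_zero _ h0) (pow_ne_top htop)]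
  calc ∑' ℓ, T ^ ℓ * ∑' j, b (ℓ + j + 1)
      = ∑' j, T⁻¹ ^ (j + 1) * ∑' ℓ, T ^ (ℓ + j + 1) * b (ℓ + j + 1) := by
        simp_rw [← ENNReal.tsum_mul_left, ← mul_assoc, ← hweight]
        exact ENNReal.tsum_comm
    _ ≤ ∑' j, T⁻¹ ^ (j + 1) * ∑' k, T ^ k * b k := by
        refine ENNReal.tsum_le_tsum fun j => mul_le_mul_right ?_ _
        exact ENNReal.tsum_comp_le_tsum_of_injective (add_left_injective (j + 1)) _
    _ = (T - 1)⁻¹ * ∑' k, T ^ k * b k := by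
        rw [ENNReal.tsum_mul_right, tsum_inv_pow_succ h0 htop]

theorem tsum_pow_mul_tsum_tail_add_le {T : ℝ≥0∞} (h0 : T ≠ 0) (htop : T ≠ ∞)
    (b : ℕ → ℝ≥0∞) :
    ∑' ℓ, T ^ ℓ * ∑' j, b (ℓ + j + 1) + b 0 ≤ (1 + (T - 1)⁻¹) * ∑' k, T ^ k * b k := by
  rw [add_mul, one_mul, add_comm]
  gcongr
  · simpa using ENNReal.le_tsum (f := fun k => T ^ k * b k) 0
  · exact tsum_pow_mul_tsum_tail_le h0 htop b

end ENNReal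

theorem hasSum_sub_succ_of_antitone {e : ℕ → ℝ} (he : Antitone e)
    (hlim : Tendsto e atTop (𝓝 0)) : HasSum (fun n => e n - e (n + 1)) (e 0) := by
  rw [hasSum_iff_tendsto_nat_of_nonneg fun n => sub_nonneg.2 (he n.le_succ)]
  simp_rw [Finset.sum_range_sub']
  simpa using (tendsto_const_nhds (x := e 0)).sub hlim

theorem tendsto_of_forall_dist_le {X : Type*} [PseudoMetricSpace X] {V : ℕ → Set X}
    (hV : Monotone V) {x : X} {p : ℕ → X} (hbest : ∀ ℓ, ∀ v ∈ V ℓ, dist x (p ℓ) ≤ dist x v)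
    (hx : x ∈ closure (⋃ ℓ, V ℓ)) : Tendsto p atTop (𝓝 x) := by
  rw [Metric.tendsto_atTop]
  intro ε hε
  obtain ⟨v, hv, hxv⟩ := Metric.mem_closure_iff.1 hx ε hε
  obtain ⟨k, hvk⟩ := Set.mem_iUnion.1 hv
  exact ⟨k, fun m hm => by
    rw [dist_comm]; exact (hbest m v (hV hm hvk)).trans_lt hxv⟩

section Projection

variable {H : Type*} [NormedAddCommGroup H] [InnerProductSpace ℝ H]

theorem norm_sub_sq_eq_of_forall_inner_eq_zero {K : Submodule ℝ H} {u p v : H} (hp : p ∈ K)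
    (horth : ∀ w ∈ K, ⟪u - p, w⟫ = 0) (hv : v ∈ K) :
    ‖u - v‖ ^ 2 = ‖u - p‖ ^ 2 + ‖p - v‖ ^ 2 := by
  rw [← sub_add_sub_cancel u p v, norm_add_sq_real, horth _ (sub_mem hp hv)]
  ring

theorem norm_sub_le_of_forall_inner_eq_zero {K : Submodule ℝ H} {u p v : H} (hp : p ∈ K)
    (horth : ∀ w ∈ K, ⟪u - p, w⟫ = 0) (hv : v ∈ K) : ‖u - p‖ ≤ ‖u - v‖ := by
  rw [← sq_le_sq₀ (norm_nonneg _) (norm_nonneg _),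
    norm_sub_sq_eq_of_forall_inner_eq_zero hp horth hv]
  exact le_add_of_nonneg_right (sq_nonneg _)

theorem hasSum_norm_sub_sq_succ {V : ℕ → Submodule ℝ H} (hV : Monotone V) {u : H}
    {p : ℕ → H} (hmem : ∀ ℓ, p ℓ ∈ V ℓ) (horth : ∀ ℓ, ∀ w ∈ V ℓ, ⟪u - p ℓ, w⟫ = 0)
    (hu : u ∈ closure (⋃ ℓ, (V ℓ : Set H))) (ℓ : ℕ) :
    HasSum (fun j => ‖p (ℓ + j + 1) - p (ℓ + j)‖ ^ 2) (‖u - p ℓ‖ ^ 2) := by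
  have hpyth : ∀ n, ‖u - p n‖ ^ 2 = ‖u - p (n + 1)‖ ^ 2 + ‖p (n + 1) - p n‖ ^ 2 := fun n =>
    norm_sub_sq_eq_of_forall_inner_eq_zero (hmem (n + 1)) (horth (n + 1)) (hV n.le_succ (hmem n))
  have hp : Tendsto p atTop (𝓝 u) := by
    refine tendsto_of_forall_dist_le (fun _ _ h => hV h) (fun ℓ v hv => ?_) hu
    simpa only [dist_eq_norm] using norm_sub_le_of_forall_inner_eq_zero (hmem ℓ) (horth ℓ) hv
  have hlim : Tendsto (fun n => ‖u - p (ℓ + n)‖ ^ 2) atTop (𝓝 0) := by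
    have hshift := hp.comp (tendsto_atTop_mono (Nat.le_add_left · ℓ) tendsto_id)
    simpa [norm_sub_rev] using (tendsto_iff_norm_sub_tendsto_zero.1 hshift).pow 2
  have hanti : Antitone fun n => ‖u - p (ℓ + n)‖ ^ 2 := antitone_nat_of_succ_le fun n => by
    rw [← add_assoc, hpyth (ℓ + n)]
    exact le_add_of_nonneg_right (sq_nonneg _)
  have hinc : (fun j => ‖p (ℓ + j + 1) - p (ℓ + j)‖ ^ 2) =
      fun n => ‖u - p (ℓ + n)‖ ^ 2 - ‖u - p (ℓ + (n + 1))‖ ^ 2 := by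
    funext n
    rw [← add_assoc, hpyth (ℓ + n)]
    ring
  rw [hinc]
  exact hasSum_sub_succ_of_antitone hanti hlim

end Projection

theorem stmt_11_general {H : Type*} [NormedAddCommGroup H] [InnerProductSpace ℝ H]
    (V : ℕ → Submodule ℝ H)
    (hnested : ∀ ℓ, V ℓ ≤ V (ℓ + 1))
    (P : ℕ → H → H)
    (hproj : ∀ ℓ u, P ℓ u ∈ V ℓ ∧ ∀ w ∈ V ℓ, ⟪u - P ℓ u, w⟫ = 0)
    (θ : ℝ) (hθ : 1 < θ)
    (u : H) (hu : u ∈ closure (⋃ ℓ, (V ℓ : Set H))) :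
    ENNReal.ofReal θ⁻¹ *
        (∑' ℓ : ℕ, ENNReal.ofReal θ ^ ℓ *
          ENNReal.ofReal (‖P ℓ u - (if ℓ = 0 then 0 else P (ℓ - 1) u)‖ ^ 2))
      ≤ (∑' ℓ : ℕ, ENNReal.ofReal θ ^ ℓ * ENNReal.ofReal (‖u - P ℓ u‖ ^ 2))
          + ENNReal.ofReal (‖P 0 u‖ ^ 2) ∧
    (∑' ℓ : ℕ, ENNReal.ofReal θ ^ ℓ * ENNReal.ofReal (‖u - P ℓ u‖ ^ 2))
        + ENNReal.ofReal (‖P 0 u‖ ^ 2)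
      ≤ ENNReal.ofReal (1 + (θ - 1)⁻¹) *
          ∑' ℓ : ℕ, ENNReal.ofReal θ ^ ℓ *
            ENNReal.ofReal (‖P ℓ u - (if ℓ = 0 then 0 else P (ℓ - 1) u)‖ ^ 2) := by
  set b : ℕ → ℝ≥0∞ := fun ℓ =>
    ENNReal.ofReal (‖P ℓ u - (if ℓ = 0 then 0 else P (ℓ - 1) u)‖ ^ 2)
  have hb0 : ENNReal.ofReal (‖P 0 u‖ ^ 2) = b 0 := by simp [b]
  have htail : ∀ ℓ, ENNReal.ofReal (‖u - P ℓ u‖ ^ 2) = ∑' j, b (ℓ + j + 1) := fun ℓ => by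
    have hsum := hasSum_norm_sub_sq_succ (monotone_nat_of_le_succ hnested)
      (fun ℓ => (hproj ℓ u).1) (fun ℓ => (hproj ℓ u).2) hu ℓ
    rw [← hsum.tsum_eq, ENNReal.ofReal_tsum_of_nonneg (fun _ => sq_nonneg _) hsum.summable]
    simp [b]
  have hT : 1 < ENNReal.ofReal θ := ENNReal.one_lt_ofReal.2 hθ
  have hconst : ENNReal.ofReal (1 + (θ - 1)⁻¹) = 1 + (ENNReal.ofReal θ - 1)⁻¹ := by
    rw [ENNReal.ofReal_add zero_le_one (inv_nonneg.2 (sub_nonneg.2 hθ.le)), ENNReal.ofReal_one,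
      ENNReal.ofReal_inv_of_pos (sub_pos.2 hθ), ENNReal.ofReal_sub _ zero_le_one,
      ENNReal.ofReal_one]
  simp_rw [htail, hb0, hconst, ENNReal.ofReal_inv_of_pos (zero_lt_one.trans hθ)]
  refine ⟨ENNReal.inv_mul_tsum_pow_mul_le hT.le fun ℓ => ?_,
    ENNReal.tsum_pow_mul_tsum_tail_add_le (zero_lt_one.trans hT).ne' ENNReal.ofReal_ne_top b⟩
  exact ENNReal.le_tsum (f := fun j => b (ℓ + j + 1)) 0

/-- Abstract two-sided norm equivalence behind Corollary 6.4 ('Norm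
equivalence II'): for nested closed subspaces `V ℓ` of a Hilbert space with
orthogonal projections `P ℓ` (and `P₋₁ := 0`), any `u` in the closure of
`⋃ V ℓ` satisfies, with `θ > 1`,
`θ⁻¹ ∑ θ^ℓ ‖(Pℓ − Pℓ₋₁)u‖² ≤ ∑ θ^ℓ ‖u − Pℓ u‖² + ‖P₀ u‖²
  ≤ (1 + (θ−1)⁻¹) ∑ θ^ℓ ‖(Pℓ − Pℓ₋₁)u‖²` in `[0,∞]`. -/
theorem stmt_11 {H : Type*} [NormedAddCommGroup H] [InnerProductSpace ℝ H]
    [CompleteSpace H]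
    (V : ℕ → Submodule ℝ H) (hclosed : ∀ ℓ, IsClosed (V ℓ : Set H))
    (hnested : ∀ ℓ, V ℓ ≤ V (ℓ + 1))
    (P : ℕ → H → H)
    (hproj : ∀ ℓ u, P ℓ u ∈ V ℓ ∧ ∀ w ∈ V ℓ, ⟪u - P ℓ u, w⟫ = 0)
    (θ : ℝ) (hθ : 1 < θ)
    (u : H) (hu : u ∈ closure (⋃ ℓ, (V ℓ : Set H))) :
    ENNReal.ofReal θ⁻¹ *
        (∑' ℓ : ℕ, ENNReal.ofReal θ ^ ℓ *
          ENNReal.ofReal (‖P ℓ u - (if ℓ = 0 then 0 else P (ℓ - 1) u)‖ ^ 2))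
      ≤ (∑' ℓ : ℕ, ENNReal.ofReal θ ^ ℓ * ENNReal.ofReal (‖u - P ℓ u‖ ^ 2))
          + ENNReal.ofReal (‖P 0 u‖ ^ 2) ∧
    (∑' ℓ : ℕ, ENNReal.ofReal θ ^ ℓ * ENNReal.ofReal (‖u - P ℓ u‖ ^ 2))
        + ENNReal.ofReal (‖P 0 u‖ ^ 2)
      ≤ ENNReal.ofReal (1 + (θ - 1)⁻¹) *
          ∑' ℓ : ℕ, ENNReal.ofReal θ ^ ℓ *
            ENNReal.ofReal (‖P ℓ u - (if ℓ = 0 then 0 else P (ℓ - 1) u)‖ ^ 2) :=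
  stmt_11_general V hnested P hproj θ hθ u hu
end
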